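/- arXiv:2205.06425 — 7 statements merged into one kernel-verified Lean document; each statement's English description precedes it below -/
import Mathlib

section
/- (Corollary of the S-arithmetic Dirichlet theorem) For each finite place p ∈ S_f there is a constant C_p ≥ 1 (and C_∞ = 1) such that for every A = (A_p)_{p∈S} ∈ Mat_{m,n}(ℚ_S) there are infinitely many pairs (p⃗, q⃗) ∈ ℤ_S^m × ℤ_S^n satisfying, for all p ∈ S, ‖A_p q⃗ + p⃗‖_p^m ≤ C_p · min{1, ‖q⃗‖_p^{-n}}. -/
open MeasureTheory Matrix

noncomputable section

/-- `z` belongs to the ring of `S`-integers `ℤ_S = ℤ[1/P]`,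
where `P` is the product of the finite primes in `S`. -/
def IsZS (P : ℕ) (z : ℚ) : Prop := ∃ (a : ℤ) (k : ℕ), z = (a : ℚ) / (P : ℚ) ^ k

/-- A collection of approximating functions `ψ = (ψ_p)_{p ∈ S}`:
each `ψ_p : ℝ_{>0} → ℝ_{>0}` is non-increasing and `≡ 1` on `(0,1]`
(we extend by `1` on `t ≤ 1`); moreover for each finite place `p`,
`ψ_p` is constant on `{p^{kn}, …, p^{kn+n-1}}` for every `k ∈ ℤ` and
takes values in `p^{mℤ}` on `p^ℤ`. -/
structure ApproxFamily (m n s : ℕ) (p : Fin s → ℕ) : Type where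
  psiR : ℝ → ℝ
  psiP : Fin s → ℝ → ℝ
  posR : ∀ t, 0 < psiR t
  antiR : ∀ ⦃t₁ t₂ : ℝ⦄, 0 < t₁ → t₁ ≤ t₂ → psiR t₂ ≤ psiR t₁
  oneR : ∀ ⦃t : ℝ⦄, t ≤ 1 → psiR t = 1
  posP : ∀ i t, 0 < psiP i t
  antiP : ∀ i ⦃t₁ t₂ : ℝ⦄, 0 < t₁ → t₁ ≤ t₂ → psiP i t₂ ≤ psiP i t₁
  oneP : ∀ i ⦃t : ℝ⦄, t ≤ 1 → psiP i t = 1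
  constP : ∀ i (k : ℤ) (j : ℕ), j < n →
    psiP i ((p i : ℝ) ^ (k * n + j : ℤ)) = psiP i ((p i : ℝ) ^ (k * n : ℤ))
  valsP : ∀ i (k : ℤ), ∃ l : ℤ, psiP i ((p i : ℝ) ^ k) = (p i : ℝ) ^ (m * l : ℤ)

/-- The real components of the diagonal embedding of a rational vector. -/
def ratR {k : ℕ} (q : Fin k → ℚ) : Fin k → ℝ := fun j => (q j : ℝ)

/-- The `p i`-adic components of the diagonal embedding of a rational vector. -/
def ratP {s : ℕ} (p : Fin s → ℕ) [∀ i, Fact (p i).Prime] {k : ℕ} (i : Fin s)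
    (q : Fin k → ℚ) : Fin k → ℚ_[p i] := fun j => (q j : ℚ_[p i])

/-- The region `E_f(T) ⊆ ℚ_S^m × ℚ_S^n` cut out by `‖x‖_p^m ≤ f_p(‖y‖_p^n)` and
`‖y‖_p^n ≤ T_p` for all `p ∈ S` (product coordinates). -/
def Eprod (m n : ℕ) {s : ℕ} (p : Fin s → ℕ) [∀ i, Fact (p i).Prime]
    (fR : ℝ → ℝ) (fP : Fin s → ℝ → ℝ) (TR : ℝ) (TP : Fin s → ℝ) :
    Set (((Fin m → ℝ) × ∀ i, Fin m → ℚ_[p i]) × ((Fin n → ℝ) × ∀ i, Fin n → ℚ_[p i])) :=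
  {xy | ‖xy.1.1‖ ^ m ≤ fR (‖xy.2.1‖ ^ n) ∧ ‖xy.2.1‖ ^ n ≤ TR ∧
      ∀ i, ‖xy.1.2 i‖ ^ m ≤ fP i (‖xy.2.2 i‖ ^ n) ∧ ‖xy.2.2 i‖ ^ n ≤ TP i}

/-- The region `E_f(T) ⊆ ℚ_S^{m+n}`, where the first `m` coordinates play the role of
`x` and the last `n` coordinates the role of `y`. -/
def Efull (m n : ℕ) {s : ℕ} (p : Fin s → ℕ) [∀ i, Fact (p i).Prime]
    (fR : ℝ → ℝ) (fP : Fin s → ℝ → ℝ) (TR : ℝ) (TP : Fin s → ℝ) :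
    Set ((Fin (m + n) → ℝ) × ∀ i, Fin (m + n) → ℚ_[p i]) :=
  {v | ‖fun a : Fin m => v.1 (Fin.castAdd n a)‖ ^ m
        ≤ fR (‖fun b : Fin n => v.1 (Fin.natAdd m b)‖ ^ n) ∧
      ‖fun b : Fin n => v.1 (Fin.natAdd m b)‖ ^ n ≤ TR ∧
      ∀ i, ‖fun a : Fin m => v.2 i (Fin.castAdd n a)‖ ^ m
            ≤ fP i (‖fun b : Fin n => v.2 i (Fin.natAdd m b)‖ ^ n) ∧
          ‖fun b : Fin n => v.2 i (Fin.natAdd m b)‖ ^ n ≤ TP i}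

/-- The operator norm of a real matrix acting on sup-normed spaces. -/
def opNorm {k l : ℕ} (M : Matrix (Fin k) (Fin l) ℝ) : ℝ :=
  ‖LinearMap.toContinuousLinearMap M.mulVecLin‖

/-- An element of the group `𝐇 = ∏_{p ∈ S} H_p` of block lower-triangular matrices,
given by its blocks at each place. -/
structure HElem (m n : ℕ) (s : ℕ) (p : Fin s → ℕ) [∀ i, Fact (p i).Prime] : Type where
  aR : Matrix (Fin m) (Fin m) ℝ
  bR : Matrix (Fin n) (Fin m) ℝ
  cR : Matrix (Fin n) (Fin n) ℝ
  aP : ∀ i, Matrix (Fin m) (Fin m) ℚ_[p i]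
  bP : ∀ i, Matrix (Fin n) (Fin m) ℚ_[p i]
  cP : ∀ i, Matrix (Fin n) (Fin n) ℚ_[p i]

/-- The action of an element of `𝐇` on `ℚ_S^m × ℚ_S^n`:
`h·(x, y) = (α x, β x + γ y)` at each place. -/
def HElem.act {m n s : ℕ} {p : Fin s → ℕ} [∀ i, Fact (p i).Prime] (h : HElem m n s p)
    (xy : ((Fin m → ℝ) × ∀ i, Fin m → ℚ_[p i]) × ((Fin n → ℝ) × ∀ i, Fin n → ℚ_[p i])) :
    ((Fin m → ℝ) × ∀ i, Fin m → ℚ_[p i]) × ((Fin n → ℝ) × ∀ i, Fin n → ℚ_[p i]) :=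
  ((h.aR.mulVec xy.1.1, fun i => (h.aP i).mulVec (xy.1.2 i)),
   (h.bR.mulVec xy.1.1 + h.cR.mulVec xy.2.1,
    fun i => (h.bP i).mulVec (xy.1.2 i) + (h.cP i).mulVec (xy.2.2 i)))

/-- Membership in `H̃_{∞,ε}`: operator norm bounds on the blocks. -/
def inHtilde (m n : ℕ) (ε : ℝ) (α : Matrix (Fin m) (Fin m) ℝ) (β : Matrix (Fin n) (Fin m) ℝ)
    (γ : Matrix (Fin n) (Fin n) ℝ) : Prop :=
  opNorm α ^ m ≤ 1 + ε ∧ opNorm γ ^ n ≤ 1 + ε / 2 ∧ opNorm β ≤ ε / (4 * n)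

/-- `h ∈ (H̃_{∞,ε} ∩ H̃_{∞,ε}⁻¹) × ∏_{p ∈ S_f} H_p(ℤ_p)`. -/
def HElem.isAdmissible {m n s : ℕ} {p : Fin s → ℕ} [∀ i, Fact (p i).Prime]
    (h : HElem m n s p) (ε : ℝ) : Prop :=
  IsUnit h.aR.det ∧ IsUnit h.cR.det ∧
  inHtilde m n ε h.aR h.bR h.cR ∧
  inHtilde m n ε h.aR⁻¹ (-(h.cR⁻¹ * h.bR * h.aR⁻¹)) h.cR⁻¹ ∧
  ∀ i, ((∀ a b, ‖h.aP i a b‖ ≤ 1) ∧ ‖(h.aP i).det‖ = 1) ∧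
      ((∀ a b, ‖h.cP i a b‖ ≤ 1) ∧ ‖(h.cP i).det‖ = 1) ∧
      (∀ a b, ‖h.bP i a b‖ ≤ 1)

end

/-! Strong approximation gives an `S`-integral matrix `R` with `‖A_p - R‖_p ≤ 1` at every finite
place: sum the `p`-adic principal parts of the entries over the (distinct) primes of `S_f`, each
summand being integral at the other places. For integer vectors `q ≠ 0` and `z`, the pair
`(z - R q, q)` is then good at every finite place with constant `1`, because `A_p q + z - R q` is
`p`-integral and `0 < ‖q‖_p ≤ 1`. At the real place the condition reads
`‖(A_∞ - R) q + z‖^m ≤ min 1 ‖q‖^(-n)`, and Dirichlet's theorem gives infinitely many such `(q, z)`: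
scale an exact solution if there is one, otherwise the errors of the solutions tend to zero. -/

def sIntegerSubring (P : ℕ) (hP : P ≠ 0) : Subring ℚ where
  carrier := {z | IsZS P z}
  zero_mem' := ⟨0, 0, by simp⟩
  one_mem' := ⟨1, 0, by simp⟩
  add_mem' := by
    rintro _ _ ⟨a, k, rfl⟩ ⟨b, l, rfl⟩
    refine ⟨a * P ^ l + b * P ^ k, k + l, ?_⟩
    have hP' : (P : ℚ) ≠ 0 := by exact_mod_cast hP
    push_cast
    field_simp
    ring
  mul_mem' := by
    rintro _ _ ⟨a, k, rfl⟩ ⟨b, l, rfl⟩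
    exact ⟨a * b, k + l, by push_cast; ring⟩
  neg_mem' := by
    rintro _ ⟨a, k, rfl⟩
    exact ⟨-a, k, by push_cast; ring⟩

theorem isZS_intCast_div_pow_of_dvd {d P : ℕ} (hP : P ≠ 0) (hd : d ∣ P) (a : ℤ) (k : ℕ) :
    IsZS P (a / (d : ℚ) ^ k) := by
  obtain ⟨c, rfl⟩ := hd
  have hc : (c : ℚ) ≠ 0 := by exact_mod_cast right_ne_zero_of_mul hP
  refine ⟨a * c ^ k, k, ?_⟩
  push_cast
  rw [mul_pow, mul_div_mul_right _ _ (pow_ne_zero k hc)]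

namespace Padic

variable {p : ℕ} [hp : Fact p.Prime]

theorem norm_intCast_div_pow_le_one {q : ℕ} (hq : q.Prime) (hpq : p ≠ q) (a : ℤ) (k : ℕ) :
    ‖((a / (q : ℚ) ^ k : ℚ) : ℚ_[p])‖ ≤ 1 := by
  have hnorm : ‖(q : ℚ_[p])‖ = 1 :=
    norm_natCast_eq_one_iff.2 ((Nat.coprime_primes hp.out hq).2 hpq)
  push_cast
  rw [norm_div, norm_pow, hnorm, one_pow, div_one]
  exact norm_int_le_one a

theorem exists_intCast_div_pow_norm_sub_le_one (x : ℚ_[p]) :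
    ∃ (a : ℤ) (k : ℕ), ‖x - ((a / (p : ℚ) ^ k : ℚ) : ℚ_[p])‖ ≤ 1 := by
  have hp0 : (0 : ℝ) < p := by exact_mod_cast hp.out.pos
  obtain ⟨k, hk⟩ := pow_unbounded_of_one_lt ‖x‖ (by exact_mod_cast hp.out.one_lt : (1 : ℝ) < p)
  have hy : ‖x * (p : ℚ_[p]) ^ k‖ ≤ 1 := by
    rw [norm_mul, norm_p_pow, _root_.zpow_neg, zpow_natCast, ← div_eq_mul_inv]
    exact (div_le_one (by positivity)).2 hk.le
  obtain ⟨a, ha⟩ := PadicInt.denseRange_intCast.exists_dist_lt (⟨_, hy⟩ : ℤ_[p])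
    (by positivity : (0 : ℝ) < (p : ℝ) ^ (-(k : ℤ)))
  refine ⟨a, k, ?_⟩
  have hpk : (p : ℚ_[p]) ^ k ≠ 0 := pow_ne_zero k (by exact_mod_cast hp.out.ne_zero)
  have hx : x - ((a / (p : ℚ) ^ k : ℚ) : ℚ_[p]) = (x * (p : ℚ_[p]) ^ k - a) / (p : ℚ_[p]) ^ k := by
    push_cast
    field_simp
  rw [hx, norm_div, norm_p_pow, div_le_one (by positivity)]
  exact ha.le

end Padic

theorem exists_isZS_norm_sub_le_one {ι : Type*} [Fintype ι] (p : ι → ℕ) [∀ i, Fact (p i).Prime]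
    (hp : Function.Injective p) (x : ∀ i, ℚ_[p i]) :
    ∃ r : ℚ, IsZS (∏ i, p i) r ∧ ∀ i, ‖x i - r‖ ≤ 1 := by
  classical
  have hP : ∏ i, p i ≠ 0 := Finset.prod_ne_zero_iff.2 fun i _ => (Fact.out : (p i).Prime).ne_zero
  choose a k hak using fun i => Padic.exists_intCast_div_pow_norm_sub_le_one (x i)
  refine ⟨∑ j, (a j / (p j : ℚ) ^ k j : ℚ),
    Subring.sum_mem (sIntegerSubring _ hP) fun j _ =>
      isZS_intCast_div_pow_of_dvd hP (Finset.dvd_prod_of_mem p (Finset.mem_univ j)) _ _,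
    fun i => ?_⟩
  rw [← PadicInt.mem_subring_iff, ← Finset.add_sum_erase _ _ (Finset.mem_univ i),
    Rat.cast_add, Rat.cast_sum, ← sub_sub]
  refine sub_mem (hak i) (sum_mem fun j hj => ?_)
  have hji : p i ≠ p j := hp.ne (Finset.ne_of_mem_erase hj).symm
  exact Padic.norm_intCast_div_pow_le_one (Fact.out : (p j).Prime) hji _ _

theorem abs_sub_lt_inv_of_natFloor_mul_eq {x y c : ℝ} (hx : 0 ≤ x) (hy : 0 ≤ y) (hc : 0 < c)
    (h : ⌊x * c⌋₊ = ⌊y * c⌋₊) : |x - y| < c⁻¹ := by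
  have hint : ⌊x * c⌋ = ⌊y * c⌋ := by
    rw [← Int.natCast_floor_eq_floor (by positivity), ← Int.natCast_floor_eq_floor (by positivity),
      h]
  have h1 := Int.abs_sub_lt_one_of_floor_eq_floor hint
  rw [← sub_mul, abs_mul, abs_of_pos hc] at h1
  rwa [← one_mul c⁻¹, lt_mul_inv_iff₀ hc]

section Dirichlet

variable {ι κ : Type*} [Fintype κ]

def dirichletResidual (B : Matrix ι κ ℝ) (q : κ → ℤ) (z : ι → ℤ) : ι → ℝ :=
  B *ᵥ ((↑) ∘ q) + (↑) ∘ z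

theorem dirichletResidual_smul (B : Matrix ι κ ℝ) (c : ℤ) (q : κ → ℤ) (z : ι → ℤ) :
    dirichletResidual B (c • q) (c • z) = (c : ℝ) • dirichletResidual B q z := by
  ext a
  simp [dirichletResidual, Matrix.mulVec, dotProduct, mul_add, Finset.mul_sum, mul_left_comm]

/-- Dirichlet's simultaneous approximation theorem, proved by the pigeonhole principle on the
fractional parts of `B v` for `v ∈ {0, …, T ^ card ι} ^ κ`. -/
theorem exists_dirichletResidual_norm_lt [Fintype ι] [Nonempty κ] (B : Matrix ι κ ℝ) {T : ℕ}
    (hT : 0 < T) :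
    ∃ (q : κ → ℤ) (z : ι → ℤ), q ≠ 0 ∧ ‖((↑) ∘ q : κ → ℝ)‖ ≤ (T : ℝ) ^ Fintype.card ι ∧
      ‖dirichletResidual B q z‖ < ((T : ℝ) ^ Fintype.card κ)⁻¹ := by
  classical
  set m := Fintype.card ι
  set n := Fintype.card κ
  have hN : (0 : ℝ) < (T : ℝ) ^ n := by positivity
  let src := Fintype.piFinset fun _ : κ => Finset.range (T ^ m + 1)
  let tgt := Fintype.piFinset fun _ : ι => Finset.range (T ^ n)
  let box : (κ → ℕ) → ι → ℕ := fun v a => ⌊Int.fract ((B *ᵥ ((↑) ∘ v)) a) * (T : ℝ) ^ n⌋₊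
  have hcard : tgt.card < src.card := by
    simp only [tgt, src, Fintype.card_piFinset, Finset.card_range, Finset.prod_const,
      Finset.card_univ]
    calc (T ^ n) ^ m = (T ^ m) ^ n := by rw [← pow_mul, ← pow_mul, mul_comm]
      _ < (T ^ m + 1) ^ n := Nat.pow_lt_pow_left (Nat.lt_succ_self _) Fintype.card_ne_zero
  have hbox : Set.MapsTo box src tgt := fun v _ => by
    simp only [tgt, Finset.mem_coe, Fintype.mem_piFinset, Finset.mem_range]
    intro a
    rw [Nat.floor_lt (mul_nonneg (Int.fract_nonneg _) hN.le)]
    push_cast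
    exact mul_lt_of_lt_one_left hN (Int.fract_lt_one _)
  obtain ⟨v, hv, w, hw, hvw, hbvw⟩ := Finset.exists_ne_map_eq_of_card_lt_of_maps_to hcard hbox
  simp only [src, Fintype.mem_piFinset, Finset.mem_range, Nat.lt_succ_iff] at hv hw
  refine ⟨fun b => v b - w b, fun a => ⌊(B *ᵥ ((↑) ∘ w)) a⌋ - ⌊(B *ᵥ ((↑) ∘ v)) a⌋, ?_, ?_, ?_⟩
  · intro h0
    exact hvw (funext fun b => by simpa [sub_eq_zero] using congrFun h0 b)
  · refine (pi_norm_le_iff_of_nonneg (by positivity)).2 fun b => ?_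
    simp only [Function.comp_apply, Int.cast_sub, Int.cast_natCast, Real.norm_eq_abs, abs_le]
    have hvb : (v b : ℝ) ≤ (T : ℝ) ^ m := by exact_mod_cast hv b
    have hwb : (w b : ℝ) ≤ (T : ℝ) ^ m := by exact_mod_cast hw b
    constructor <;> linarith [(v b).cast_nonneg (α := ℝ), (w b).cast_nonneg (α := ℝ)]
  · refine (pi_norm_lt_iff (by positivity)).2 fun a => ?_
    have hfract := abs_sub_lt_inv_of_natFloor_mul_eq (Int.fract_nonneg _) (Int.fract_nonneg _) hN
      (congrFun hbvw a)
    convert hfract using 2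
    have hq : ((↑) ∘ fun b => (v b : ℤ) - w b : κ → ℝ) = (↑) ∘ v - (↑) ∘ w := by ext; simp
    simp only [dirichletResidual, hq, Matrix.mulVec_sub, Pi.add_apply, Pi.sub_apply,
      Function.comp_apply, Int.cast_sub, Real.norm_eq_abs, Int.fract]
    ring_nf

variable [Fintype ι]

def dirichletSet (B : Matrix ι κ ℝ) : Set ((κ → ℤ) × (ι → ℤ)) :=
  {qz | qz.1 ≠ 0 ∧ ‖dirichletResidual B qz.1 qz.2‖ ^ Fintype.card ι
    ≤ min 1 (‖((↑) ∘ qz.1 : κ → ℝ)‖ ^ Fintype.card κ)⁻¹}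

theorem norm_intCast_comp_pos {K : Type*} [NormedRing K] [CharZero K] {q : κ → ℤ} (hq : q ≠ 0) :
    0 < ‖((↑) ∘ q : κ → K)‖ := by
  refine norm_pos_iff.2 fun h => hq (funext fun b => ?_)
  simpa using congrFun h b

theorem exists_mem_dirichletSet_norm_lt [Nonempty κ] (B : Matrix ι κ ℝ) {T : ℕ} (hT : 0 < T) :
    ∃ qz ∈ dirichletSet B, ‖dirichletResidual B qz.1 qz.2‖ < ((T : ℝ) ^ Fintype.card κ)⁻¹ := by
  obtain ⟨q, z, hq, hqT, hres⟩ := exists_dirichletResidual_norm_lt B hT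
  refine ⟨(q, z), ⟨hq, ?_⟩, hres⟩
  set m := Fintype.card ι
  set n := Fintype.card κ
  have hT1 : (1 : ℝ) ≤ T := by exact_mod_cast hT
  calc ‖dirichletResidual B q z‖ ^ m ≤ (((T : ℝ) ^ n)⁻¹) ^ m := by gcongr
    _ = (((T : ℝ) ^ m) ^ n)⁻¹ := by rw [inv_pow, ← pow_mul, ← pow_mul, mul_comm]
    _ ≤ min 1 (‖((↑) ∘ q : κ → ℝ)‖ ^ n)⁻¹ := by
      refine le_min (inv_le_one_of_one_le₀ (one_le_pow₀ (one_le_pow₀ hT1))) ?_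
      have := norm_intCast_comp_pos (K := ℝ) hq
      gcongr

theorem dirichletSet_infinite [Nonempty ι] [Nonempty κ] (B : Matrix ι κ ℝ) :
    (dirichletSet B).Infinite := by
  by_cases hexact : ∃ qz ∈ dirichletSet B, dirichletResidual B qz.1 qz.2 = 0
  · obtain ⟨⟨q, z⟩, ⟨hq, -⟩, h0⟩ := hexact
    have hk : ∀ k : ℕ, ((k : ℤ) + 1) ≠ 0 := fun k => by omega
    refine Set.infinite_of_injective_forall_mem
      (f := fun k : ℕ => (((k : ℤ) + 1) • q, ((k : ℤ) + 1) • z)) (fun k l hkl => ?_) fun k => ?_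
    · have := smul_left_injective ℤ hq (congrArg Prod.fst hkl)
      simp only [add_left_inj, Nat.cast_inj] at this
      exact this
    · refine ⟨smul_ne_zero (hk k) hq, ?_⟩
      rw [dirichletResidual_smul, h0, smul_zero, norm_zero, zero_pow Fintype.card_ne_zero]
      exact le_min zero_le_one (by positivity)
  · push Not at hexact
    intro hfin
    have hsmall : ∀ᶠ T : ℕ in Filter.atTop, ∀ qz ∈ dirichletSet B,
        ((T : ℝ) ^ Fintype.card κ)⁻¹ < ‖dirichletResidual B qz.1 qz.2‖ := by
      refine hfin.eventually_all.2 fun qz hqz => Filter.Tendsto.eventually_lt_const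
        (norm_pos_iff.2 (hexact qz hqz)) ?_
      exact tendsto_inv_atTop_zero.comp
        ((Filter.tendsto_pow_atTop Fintype.card_ne_zero).comp tendsto_natCast_atTop_atTop)
    obtain ⟨T, hTsmall, hT⟩ := (hsmall.and (Filter.eventually_gt_atTop 0)).exists
    obtain ⟨qz, hqz, hlt⟩ := exists_mem_dirichletSet_norm_lt B hT
    exact (hTsmall qz hqz).not_gt hlt

end Dirichlet

section ShearPair

variable {ι κ : Type*} [Fintype κ]

def shearPair (R : Matrix ι κ ℚ) (qz : (κ → ℤ) × (ι → ℤ)) : (ι → ℚ) × (κ → ℚ) :=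
  ((↑) ∘ qz.2 - R *ᵥ ((↑) ∘ qz.1), (↑) ∘ qz.1)

theorem shearPair_snd (R : Matrix ι κ ℚ) (qz : (κ → ℤ) × (ι → ℤ)) :
    (shearPair R qz).2 = (↑) ∘ qz.1 := rfl

theorem shearPair_injective (R : Matrix ι κ ℚ) : Function.Injective (shearPair R) := by
  rintro ⟨q, z⟩ ⟨q', z'⟩ h
  obtain rfl : q = q' := Int.cast_injective.comp_left (congrArg Prod.snd h)
  have hz := congrArg Prod.fst h
  simp only [shearPair, sub_left_inj] at hz
  rw [Int.cast_injective.comp_left hz]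

theorem shearPair_fst_mem {S : Subring ℚ} {R : Matrix ι κ ℚ} (hR : ∀ a b, R a b ∈ S)
    (qz : (κ → ℤ) × (ι → ℤ)) (a : ι) : (shearPair R qz).1 a ∈ S :=
  sub_mem (intCast_mem _ _) (Subring.sum_mem _ fun b _ => mul_mem (hR a b) (intCast_mem _ _))

theorem sum_mul_shearPair_add {K : Type*} [DivisionRing K] [CharZero K] (A : ι → κ → K)
    (R : Matrix ι κ ℚ) (qz : (κ → ℤ) × (ι → ℤ)) :
    (fun a => ∑ b, A a b * ((shearPair R qz).2 b : K) + ((shearPair R qz).1 a : K))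
      = (Matrix.of A - R.map (↑)) *ᵥ ((↑) ∘ qz.1) + (↑) ∘ qz.2 := by
  ext a
  simp [shearPair, Matrix.mulVec, dotProduct, sub_mul, Finset.sum_sub_distrib]
  abel

end ShearPair

theorem Padic.norm_mulVec_intCast_add_intCast_pow_le_min_one {ι κ : Type*} [Fintype ι]
    [Fintype κ] {p : ℕ} [Fact p.Prime] {M : Matrix ι κ ℚ_[p]} (hM : ∀ a b, ‖M a b‖ ≤ 1)
    {q : κ → ℤ} (hq : q ≠ 0) (z : ι → ℤ) (m n : ℕ) :
    ‖M *ᵥ ((↑) ∘ q) + (↑) ∘ z‖ ^ m ≤ min 1 (‖((↑) ∘ q : κ → ℚ_[p])‖ ^ n)⁻¹ := by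
  have hq_le : ‖((↑) ∘ q : κ → ℚ_[p])‖ ≤ 1 :=
    (pi_norm_le_iff_of_nonneg zero_le_one).2 fun b => norm_int_le_one _
  have hq_pos := norm_intCast_comp_pos (K := ℚ_[p]) hq
  have hMqz : ‖M *ᵥ ((↑) ∘ q) + (↑) ∘ z‖ ≤ 1 :=
    (pi_norm_le_iff_of_nonneg zero_le_one).2 fun a => (PadicInt.mem_subring_iff _).1 <|
      add_mem (Subring.sum_mem _ fun b _ => mul_mem (hM a b) (intCast_mem _ _)) (intCast_mem _ _)
  rw [min_eq_left ((one_le_inv₀ (pow_pos hq_pos n)).2 (pow_le_one₀ hq_pos.le hq_le))]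
  exact pow_le_one₀ (norm_nonneg _) hMqz

theorem ratR_intCast_comp {k : ℕ} (q : Fin k → ℤ) : ratR ((↑) ∘ q) = (↑) ∘ q := by
  ext
  simp [ratR]

theorem ratP_intCast_comp {s : ℕ} (p : Fin s → ℕ) [∀ i, Fact (p i).Prime] (i : Fin s) {k : ℕ}
    (q : Fin k → ℤ) : ratP p i ((↑) ∘ q) = (↑) ∘ q := by
  ext
  simp [ratP]

/-- **Corollary of the S-arithmetic Dirichlet theorem.**
For each finite place `p i ∈ S_f` there is a constant `C i ≥ 1` (and `C_∞ = 1`) such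
that for every `A ∈ Mat_{m,n}(ℚ_S)` there are infinitely many pairs
`(p⃗, q⃗) ∈ ℤ_S^m × ℤ_S^n` satisfying, for all `p ∈ S`,
`‖A_p q⃗ + p⃗‖_p^m ≤ C_p · min {1, ‖q⃗‖_p^{-n}}`. -/
theorem s_arithmetic_dirichlet_corollary
    (m n : ℕ) (hm : 0 < m) (hn : 0 < n)
    (s : ℕ) (p : Fin s → ℕ) [∀ i, Fact (p i).Prime] (hpinj : Function.Injective p) :
    ∃ C : Fin s → ℝ, (∀ i, 1 ≤ C i) ∧
      ∀ (AR : Fin m → Fin n → ℝ) (AP : ∀ i, Fin m → Fin n → ℚ_[p i]),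
        {pq : (Fin m → ℚ) × (Fin n → ℚ) |
          (∀ a, IsZS (∏ i, p i) (pq.1 a)) ∧ (∀ b, IsZS (∏ i, p i) (pq.2 b)) ∧
          ‖fun a => (∑ b, AR a b * (pq.2 b : ℝ)) + (pq.1 a : ℝ)‖ ^ m
            ≤ 1 * min 1 (‖ratR pq.2‖ ^ n)⁻¹ ∧
          ∀ i, ‖fun a => (∑ b, AP i a b * ((pq.2 b : ℚ) : ℚ_[p i])) + ((pq.1 a : ℚ) : ℚ_[p i])‖ ^ m
            ≤ C i * min 1 (‖ratP p i pq.2‖ ^ n)⁻¹}.Infinite := by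
  have : Nonempty (Fin m) := ⟨⟨0, hm⟩⟩
  have : Nonempty (Fin n) := ⟨⟨0, hn⟩⟩
  have hP : ∏ i, p i ≠ 0 := Finset.prod_ne_zero_iff.2 fun i _ => (Fact.out : (p i).Prime).ne_zero
  refine ⟨fun _ => 1, fun _ => le_rfl, fun AR AP => ?_⟩
  choose R hRS hR using fun a b => exists_isZS_norm_sub_le_one p hpinj fun i => AP i a b
  refine ((dirichletSet_infinite (Matrix.of AR - (Matrix.of R).map (↑))).image
    (shearPair_injective (Matrix.of R)).injOn).mono ?_
  rintro _ ⟨qz, ⟨hq, hreal⟩, rfl⟩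
  refine ⟨shearPair_fst_mem (S := sIntegerSubring _ hP) hRS qz,
    fun b => intCast_mem (sIntegerSubring _ hP) (qz.1 b), ?_, fun i => ?_⟩
  · rw [one_mul, sum_mul_shearPair_add, shearPair_snd, ratR_intCast_comp]
    simpa [dirichletResidual] using hreal
  · rw [sum_mul_shearPair_add, shearPair_snd, ratP_intCast_comp, one_mul]
    exact Padic.norm_mulVec_intCast_add_intCast_pow_le_min_one (fun a b => hR a b i) hq _ _ _
end

section
/- (Sandwich inclusions for perturbed approximating regions) Let ε ∈ (0,1) and let h = (h_p)_{p∈S} ∈ ∏_{p∈S} H_p be block lower-triangular with h_∞ ∈ H̃_{∞,ε} ∩ H̃_{∞,ε}^{-1} and h_p ∈ H_p(ℤ_p) for all p ∈ S_f. Then for every collection of approximating functions ψ = (ψ_p)_{p∈S} and every T = (T_p) ∈ ℝ_{≥1} × ∏_{p∈S_f} {p^k : k ∈ ℕ}, one has E_{ψ⁻_ε}(T⁻) ⊆ h·E_ψ(T) ⊆ E_{ψ⁺_ε}(T⁺), where T⁻ = ((1+ε)^{-1}T_∞, T_{p₁}, …, T_{p_s}) and T⁺ = ((1+ε)T_∞,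 T_{p₁}, …, T_{p_s}). -/
open MeasureTheory Matrix

/-!
Since `ψ_p ≤ 1`, every point of `E_ψ(T)` has `‖x‖_p ≤ 1` at each place. At a finite place the
blocks have integral entries, so they do not increase sup-norms, and the ultrametric inequality
gives `‖βx + γy‖ ≤ max ‖y‖ 1`; as `ψ_p` is antitone and `≡ 1` below `1`, the region is preserved.
At the real place `‖βx + γy‖ ≤ ε/(4n) + ‖γ‖ ‖y‖`, and Bernoulli's inequality
`(1 - ε/(4n))ⁿ ≥ 1 - ε/4 ≥ (1 + ε/2)/(1 + ε)` turns `‖γ‖ⁿ ≤ 1 + ε/2` into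
`‖βx + γy‖ⁿ ≤ max ((1 + ε)‖y‖ⁿ) 1`, while `‖αx‖ᵐ ≤ (1 + ε)‖x‖ᵐ`. Applied to `h` this gives the
right inclusion; applied to `h⁻¹`, whose real part lies in `H̃_{∞,ε}` and whose finite parts are
integral because the determinants are units, it gives the left one.
-/

section Ultrametric

variable {K : Type*} [NormedField K] [IsUltrametricDist K]

lemma norm_mulVec_le_of_forall_norm_le_one {κ ι : Type*} [Fintype κ] [Fintype ι]
    {M : Matrix κ ι K} (hM : ∀ a b, ‖M a b‖ ≤ 1) (v : ι → K) : ‖M *ᵥ v‖ ≤ ‖v‖ := by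
  refine (pi_norm_le_iff_of_nonneg (norm_nonneg v)).2 fun a => ?_
  refine IsUltrametricDist.norm_sum_le_of_forall_le_of_nonneg (norm_nonneg v) fun b _ => ?_
  rw [norm_mul]
  exact (mul_le_of_le_one_left (norm_nonneg _) (hM a b)).trans (norm_le_pi_norm v b)

lemma norm_mul_apply_le_one {κ ι ν : Type*} [Fintype ι] {M : Matrix κ ι K} {N : Matrix ι ν K}
    (hM : ∀ a b, ‖M a b‖ ≤ 1) (hN : ∀ a b, ‖N a b‖ ≤ 1) (a : κ) (b : ν) : ‖(M * N) a b‖ ≤ 1 :=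
  IsUltrametricDist.norm_sum_le_of_forall_le_of_nonneg zero_le_one fun c _ => by
    rw [norm_mul]
    exact mul_le_one₀ (hM a c) (norm_nonneg _) (hN c b)

lemma norm_det_le_one {ι : Type*} [Fintype ι] [DecidableEq ι] {M : Matrix ι ι K}
    (hM : ∀ a b, ‖M a b‖ ≤ 1) : ‖M.det‖ ≤ 1 := by
  rw [Matrix.det_apply']
  refine IsUltrametricDist.norm_sum_le_of_forall_le_of_nonneg zero_le_one fun σ _ => ?_
  rw [norm_mul, norm_prod]
  exact mul_le_one₀ (IsUltrametricDist.norm_intCast_le_one K _)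
    (Finset.prod_nonneg fun _ _ => norm_nonneg _)
    (Finset.prod_le_one (fun _ _ => norm_nonneg _) fun _ _ => hM _ _)

lemma norm_inv_apply_le_one {ι : Type*} [Fintype ι] [DecidableEq ι] {M : Matrix ι ι K}
    (hM : ∀ a b, ‖M a b‖ ≤ 1) (hdet : ‖M.det‖ = 1) (a b : ι) : ‖M⁻¹ a b‖ ≤ 1 := by
  rw [Matrix.inv_def, Matrix.smul_apply, smul_eq_mul, norm_mul, Ring.inverse_eq_inv', norm_inv,
    hdet, inv_one, one_mul, Matrix.adjugate_apply]
  refine norm_det_le_one fun c d => ?_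
  rw [Matrix.updateRow_apply]
  split_ifs
  · rw [Pi.single_apply]
    split_ifs <;> simp
  · exact hM c d

end Ultrametric

section ApproximatingFunction

variable {f : ℝ → ℝ}

lemma antitone_of_antitoneOn_pos_of_eq_one
    (hanti : ∀ ⦃t₁ t₂ : ℝ⦄, 0 < t₁ → t₁ ≤ t₂ → f t₂ ≤ f t₁)
    (hone : ∀ ⦃t : ℝ⦄, t ≤ 1 → f t = 1) : Antitone f := by
  intro a b hab
  rcases le_or_gt b 1 with hb | hb
  · rw [hone hb, hone (hab.trans hb)]
  rcases le_or_gt a 1 with ha | ha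
  · rw [hone ha, ← hone le_rfl]
    exact hanti one_pos hb.le
  · exact hanti (one_pos.trans ha) hab

lemma apply_max_one_of_eq_one (hone : ∀ ⦃t : ℝ⦄, t ≤ 1 → f t = 1) (t : ℝ) :
    f (max t 1) = f t := by
  rcases le_total t 1 with ht | ht
  · rw [max_eq_right ht, hone ht, hone le_rfl]
  · rw [max_eq_left ht]

lemma Antitone.le_one_of_eq_one (hf : Antitone f) (hone : ∀ ⦃t : ℝ⦄, t ≤ 1 → f t = 1)
    (t : ℝ) : f t ≤ 1 :=
  (hf (min_le_left t 1)).trans_eq (hone (min_le_right t 1))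

lemma Antitone.le_of_le_max_one (hf : Antitone f) (hone : ∀ ⦃t : ℝ⦄, t ≤ 1 → f t = 1)
    {t u : ℝ} (h : u ≤ max t 1) : f t ≤ f u :=
  (apply_max_one_of_eq_one hone t).symm.trans_le (hf h)

lemma ApproxFamily.antitone_psiR {m n s : ℕ} {p : Fin s → ℕ} (ψ : ApproxFamily m n s p) :
    Antitone ψ.psiR :=
  antitone_of_antitoneOn_pos_of_eq_one ψ.antiR ψ.oneR

lemma ApproxFamily.antitone_psiP {m n s : ℕ} {p : Fin s → ℕ} (ψ : ApproxFamily m n s p)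
    (i : Fin s) : Antitone (ψ.psiP i) :=
  antitone_of_antitoneOn_pos_of_eq_one (ψ.antiP i) (ψ.oneP i)

end ApproximatingFunction

lemma norm_le_one_of_pow_le_one {E : Type*} [SeminormedAddGroup E] {m : ℕ} {x : Fin m → E}
    (h : ‖x‖ ^ m ≤ 1) : ‖x‖ ≤ 1 := by
  rcases m with _ | m
  · rw [Subsingleton.elim x 0, norm_zero]
    exact zero_le_one
  · exact (pow_le_one_iff_of_nonneg (norm_nonneg x) m.succ_ne_zero).1 h

lemma add_pow_le_of_pow_le_one_sub_pow_mul {n : ℕ} (hn : n ≠ 0) {q u W : ℝ} (hq₀ : 0 ≤ q)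
    (hq₁ : q ≤ 1) (hu : 0 ≤ u) (hW : 1 ≤ W) (h : u ^ n ≤ (1 - q) ^ n * W) :
    (q + u) ^ n ≤ W := by
  set z := W ^ (n : ℝ)⁻¹
  have hzW : z ^ n = W := Real.rpow_inv_natCast_pow (zero_le_one.trans hW) hn
  have hz : 1 ≤ z := Real.one_le_rpow hW (by positivity)
  -- `q + u ≤ q + (1 - q) z ≤ z` because `z ≥ 1`
  have hu' : u ≤ (1 - q) * z := by
    rwa [← pow_le_pow_iff_left₀ hu (by nlinarith) hn, mul_pow, hzW]
  calc (q + u) ^ n ≤ z ^ n := pow_le_pow_left₀ (by positivity) (by nlinarith) n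
    _ = W := hzW

lemma div_one_add_le_one_sub_div_pow {n : ℕ} (hn : n ≠ 0) {ε : ℝ} (hε₀ : 0 ≤ ε) (hε₁ : ε ≤ 1) :
    (1 + ε / 2) / (1 + ε) ≤ (1 - ε / (4 * n)) ^ n := by
  have hn' : (n : ℝ) ≠ 0 := Nat.cast_ne_zero.2 hn
  have hbernoulli := one_add_mul_le_pow (a := -(ε / (4 * n))) ?_ n
  · have hmul : (n : ℝ) * -(ε / (4 * n)) = -(ε / 4) := by field_simp
    rw [hmul, ← sub_eq_add_neg] at hbernoulli
    refine le_trans ?_ hbernoulli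
    rw [div_le_iff₀ (by linarith)]
    nlinarith
  · have : ε / (4 * n) ≤ ε := div_le_self hε₀ (by norm_cast; omega)
    linarith

lemma opNorm_mulVec_le {k l : ℕ} (M : Matrix (Fin k) (Fin l) ℝ) (v : Fin l → ℝ) :
    ‖M *ᵥ v‖ ≤ opNorm M * ‖v‖ :=
  (LinearMap.toContinuousLinearMap M.mulVecLin).le_opNorm v

lemma norm_mulVec_add_mulVec_pow_le {m n : ℕ} {ε : ℝ} (hε₀ : 0 < ε) (hε₁ : ε ≤ 1)
    {β : Matrix (Fin n) (Fin m) ℝ} {γ : Matrix (Fin n) (Fin n) ℝ}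
    (hβ : opNorm β ≤ ε / (4 * n)) (hγ : opNorm γ ^ n ≤ 1 + ε / 2)
    {x : Fin m → ℝ} (hx : ‖x‖ ≤ 1) (y : Fin n → ℝ) :
    ‖β *ᵥ x + γ *ᵥ y‖ ^ n ≤ max ((1 + ε) * ‖y‖ ^ n) 1 := by
  rcases eq_or_ne n 0 with rfl | hn
  · simp
  have hq₀ : 0 ≤ ε / (4 * n) := by positivity
  have hn₁ : (1 : ℝ) ≤ n := by exact_mod_cast Nat.one_le_iff_ne_zero.2 hn
  have hq₁ : ε / (4 * n) ≤ 1 := div_le_one_of_le₀ (by linarith) (by positivity)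
  have hsum : ‖β *ᵥ x + γ *ᵥ y‖ ≤ ε / (4 * n) + opNorm γ * ‖y‖ := by
    refine (norm_add_le _ _).trans (add_le_add ?_ (opNorm_mulVec_le γ y))
    calc ‖β *ᵥ x‖ ≤ opNorm β * ‖x‖ := opNorm_mulVec_le β x
      _ ≤ ε / (4 * n) * 1 := mul_le_mul hβ hx (norm_nonneg x) hq₀
      _ = ε / (4 * n) := mul_one _
  refine (pow_le_pow_left₀ (norm_nonneg _) hsum n).trans
    (add_pow_le_of_pow_le_one_sub_pow_mul hn hq₀ hq₁
      (mul_nonneg (norm_nonneg _) (norm_nonneg y)) (le_max_right _ _) ?_)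
  calc (opNorm γ * ‖y‖) ^ n = opNorm γ ^ n * ‖y‖ ^ n := mul_pow _ _ _
    _ ≤ (1 + ε / 2) * ‖y‖ ^ n := by gcongr
    _ = (1 + ε / 2) / (1 + ε) * ((1 + ε) * ‖y‖ ^ n) := by field_simp
    _ ≤ (1 - ε / (4 * n)) ^ n * max ((1 + ε) * ‖y‖ ^ n) 1 := by
      gcongr
      · exact div_one_add_le_one_sub_div_pow hn hε₀.le hε₁
      · exact le_max_left _ _

def InLocalRegion {E F : Type*} [Norm E] [Norm F] (m n : ℕ) (f : ℝ → ℝ) (T : ℝ) (x : E)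
    (y : F) : Prop :=
  ‖x‖ ^ m ≤ f (‖y‖ ^ n) ∧ ‖y‖ ^ n ≤ T

lemma mem_Eprod_iff {m n s : ℕ} {p : Fin s → ℕ} [∀ i, Fact (p i).Prime] {fR : ℝ → ℝ}
    {fP : Fin s → ℝ → ℝ} {TR : ℝ} {TP : Fin s → ℝ}
    {xy : ((Fin m → ℝ) × ∀ i, Fin m → ℚ_[p i]) × ((Fin n → ℝ) × ∀ i, Fin n → ℚ_[p i])} :
    xy ∈ Eprod m n p fR fP TR TP ↔ InLocalRegion m n fR TR xy.1.1 xy.2.1 ∧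
      ∀ i, InLocalRegion m n (fP i) (TP i) (xy.1.2 i) (xy.2.2 i) :=
  and_assoc.symm

namespace InLocalRegion

variable {m n : ℕ} {f : ℝ → ℝ} {T : ℝ}

lemma mulVec_of_norm_le_one {K : Type*} [NormedField K] [IsUltrametricDist K]
    {A : Matrix (Fin m) (Fin m) K} {B : Matrix (Fin n) (Fin m) K} {C : Matrix (Fin n) (Fin n) K}
    (hA : ∀ a b, ‖A a b‖ ≤ 1) (hB : ∀ a b, ‖B a b‖ ≤ 1) (hC : ∀ a b, ‖C a b‖ ≤ 1)
    (hf : Antitone f) (hone : ∀ ⦃t : ℝ⦄, t ≤ 1 → f t = 1) (hT : 1 ≤ T)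
    {x : Fin m → K} {y : Fin n → K} (hxy : InLocalRegion m n f T x y) :
    InLocalRegion m n f T (A *ᵥ x) (B *ᵥ x + C *ᵥ y) := by
  have hx : ‖x‖ ≤ 1 := norm_le_one_of_pow_le_one (hxy.1.trans (hf.le_one_of_eq_one hone _))
  have hsum : ‖B *ᵥ x + C *ᵥ y‖ ≤ max ‖y‖ 1 :=
    (IsUltrametricDist.norm_add_le_max _ _).trans <| max_le
      (((norm_mulVec_le_of_forall_norm_le_one hB x).trans hx).trans (le_max_right _ _))
      ((norm_mulVec_le_of_forall_norm_le_one hC y).trans (le_max_left _ _))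
  have hsum' : ‖B *ᵥ x + C *ᵥ y‖ ^ n ≤ max (‖y‖ ^ n) 1 := by
    refine (pow_le_pow_left₀ (norm_nonneg _) hsum n).trans_eq ?_
    rw [(pow_left_monotoneOn (M₀ := ℝ) (n := n)).map_max (norm_nonneg y) (zero_le_one (α := ℝ)),
      one_pow]
  exact ⟨(pow_le_pow_left₀ (norm_nonneg _) (norm_mulVec_le_of_forall_norm_le_one hA x) m).trans
    (hxy.1.trans (hf.le_of_le_max_one hone hsum')), hsum'.trans (max_le hxy.2 hT)⟩

variable {ε : ℝ} {α : Matrix (Fin m) (Fin m) ℝ} {β : Matrix (Fin n) (Fin m) ℝ}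
  {γ : Matrix (Fin n) (Fin n) ℝ} {x : Fin m → ℝ} {y : Fin n → ℝ}

lemma mulVec_enlarged (hε₀ : 0 < ε) (hε₁ : ε ≤ 1) (hh : inHtilde m n ε α β γ)
    (hf : Antitone f) (hone : ∀ ⦃t : ℝ⦄, t ≤ 1 → f t = 1) (hT : 1 ≤ T)
    (hxy : InLocalRegion m n f T x y) :
    InLocalRegion m n (fun t => (1 + ε) * f ((1 + ε)⁻¹ * t)) ((1 + ε) * T)
      (α *ᵥ x) (β *ᵥ x + γ *ᵥ y) := by
  obtain ⟨hα, hγ, hβ⟩ := hh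
  have hx : ‖x‖ ≤ 1 := norm_le_one_of_pow_le_one (hxy.1.trans (hf.le_one_of_eq_one hone _))
  have hsum : ‖β *ᵥ x + γ *ᵥ y‖ ^ n ≤ (1 + ε) * max (‖y‖ ^ n) 1 :=
    (norm_mulVec_add_mulVec_pow_le hε₀ hε₁ hβ hγ hx y).trans <|
      max_le (by gcongr; exact le_max_left _ _) (by nlinarith [le_max_right (‖y‖ ^ n) 1])
  constructor
  · calc ‖α *ᵥ x‖ ^ m ≤ (opNorm α * ‖x‖) ^ m :=
          pow_le_pow_left₀ (norm_nonneg _) (opNorm_mulVec_le α x) m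
      _ = opNorm α ^ m * ‖x‖ ^ m := mul_pow _ _ _
      _ ≤ (1 + ε) * f (‖y‖ ^ n) := mul_le_mul hα hxy.1 (by positivity) (by linarith)
      _ ≤ (1 + ε) * f ((1 + ε)⁻¹ * ‖β *ᵥ x + γ *ᵥ y‖ ^ n) := by
          gcongr
          exact hf.le_of_le_max_one hone ((inv_mul_le_iff₀ (by linarith)).2 hsum)
  · exact hsum.trans (by gcongr; exact max_le hxy.2 hT)

lemma mulVec_of_shrunk (hε₀ : 0 < ε) (hε₁ : ε ≤ 1) (hh : inHtilde m n ε α β γ)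
    (hf : Antitone f) (hone : ∀ ⦃t : ℝ⦄, t ≤ 1 → f t = 1) (hT : 1 ≤ T)
    (hxy : InLocalRegion m n (fun t => (1 + ε)⁻¹ * f ((1 + ε) * t)) ((1 + ε)⁻¹ * T) x y) :
    InLocalRegion m n f T (α *ᵥ x) (β *ᵥ x + γ *ᵥ y) := by
  obtain ⟨hα, hγ, hβ⟩ := hh
  have hε' : 0 < 1 + ε := by linarith
  have hx : ‖x‖ ≤ 1 := by
    refine norm_le_one_of_pow_le_one (hxy.1.trans ?_)
    exact (mul_le_of_le_one_right (inv_pos.2 hε').le (hf.le_one_of_eq_one hone _)).trans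
      (inv_le_one_of_one_le₀ (by linarith))
  have hsum := norm_mulVec_add_mulVec_pow_le hε₀ hε₁ hβ hγ hx y
  constructor
  · calc ‖α *ᵥ x‖ ^ m ≤ (opNorm α * ‖x‖) ^ m :=
          pow_le_pow_left₀ (norm_nonneg _) (opNorm_mulVec_le α x) m
      _ = opNorm α ^ m * ‖x‖ ^ m := mul_pow _ _ _
      _ ≤ (1 + ε) * ((1 + ε)⁻¹ * f ((1 + ε) * ‖y‖ ^ n)) :=
          mul_le_mul hα hxy.1 (by positivity) hε'.le
      _ = f ((1 + ε) * ‖y‖ ^ n) := mul_inv_cancel_left₀ hε'.ne' _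
      _ ≤ f (‖β *ᵥ x + γ *ᵥ y‖ ^ n) := hf.le_of_le_max_one hone hsum
  · refine hsum.trans (max_le ?_ hT)
    rw [← le_inv_mul_iff₀ hε']
    exact hxy.2

end InLocalRegion

section BlockInverse

variable {K ι κ : Type*} [CommRing K] [Fintype ι] [DecidableEq ι] [Fintype κ] [DecidableEq κ]

lemma mulVec_mulVec_nonsing_inv {A : Matrix ι ι K} (hA : IsUnit A.det) (x : ι → K) :
    A *ᵥ (A⁻¹ *ᵥ x) = x := by
  rw [mulVec_mulVec, mul_nonsing_inv _ hA, one_mulVec]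

lemma mulVec_add_mulVec_neg_inv_mul_mul_inv {A : Matrix ι ι K} {B : Matrix κ ι K}
    {C : Matrix κ κ K} (hC : IsUnit C.det) (x : ι → K) (y : κ → K) :
    B *ᵥ (A⁻¹ *ᵥ x) + C *ᵥ (-(C⁻¹ * B * A⁻¹) *ᵥ x + C⁻¹ *ᵥ y) = y := by
  rw [mulVec_add, neg_mulVec, mulVec_neg, mulVec_mulVec, mulVec_mulVec, mulVec_mulVec,
    ← Matrix.mul_assoc, ← Matrix.mul_assoc, mul_nonsing_inv _ hC, Matrix.one_mul, one_mulVec]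
  abel

end BlockInverse

namespace HElem

variable {m n s : ℕ} {p : Fin s → ℕ} [∀ i, Fact (p i).Prime] (h : HElem m n s p)

/-- The inverse of `[[α, 0], [β, γ]]` is `[[α⁻¹, 0], [-γ⁻¹βα⁻¹, γ⁻¹]]`. -/
noncomputable def inv : HElem m n s p where
  aR := h.aR⁻¹
  bR := -(h.cR⁻¹ * h.bR * h.aR⁻¹)
  cR := h.cR⁻¹
  aP i := (h.aP i)⁻¹
  bP i := -((h.cP i)⁻¹ * h.bP i * (h.aP i)⁻¹)
  cP i := (h.cP i)⁻¹

def IsIntegralAtFinitePlaces : Prop :=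
  ∀ i, (∀ a b, ‖h.aP i a b‖ ≤ 1) ∧ (∀ a b, ‖h.bP i a b‖ ≤ 1) ∧ (∀ a b, ‖h.cP i a b‖ ≤ 1)

variable {h} {ε : ℝ}

lemma isAdmissible.isIntegralAtFinitePlaces (hadm : h.isAdmissible ε) :
    h.IsIntegralAtFinitePlaces :=
  fun i => ⟨(hadm.2.2.2.2 i).1.1, (hadm.2.2.2.2 i).2.2, (hadm.2.2.2.2 i).2.1.1⟩

lemma isAdmissible.inv_isIntegralAtFinitePlaces (hadm : h.isAdmissible ε) :
    h.inv.IsIntegralAtFinitePlaces := by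
  intro i
  obtain ⟨⟨hA, hAdet⟩, ⟨hC, hCdet⟩, hB⟩ := hadm.2.2.2.2 i
  have hAinv := norm_inv_apply_le_one hA hAdet
  have hCinv := norm_inv_apply_le_one hC hCdet
  refine ⟨hAinv, fun a b => ?_, hCinv⟩
  show ‖(-((h.cP i)⁻¹ * h.bP i * (h.aP i)⁻¹)) a b‖ ≤ 1
  rw [neg_apply, norm_neg]
  exact norm_mul_apply_le_one (norm_mul_apply_le_one hCinv hB) hAinv a b

lemma isAdmissible.act_inv_act (hadm : h.isAdmissible ε)
    (v : ((Fin m → ℝ) × ∀ i, Fin m → ℚ_[p i]) × ((Fin n → ℝ) × ∀ i, Fin n → ℚ_[p i])) :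
    h.act (h.inv.act v) = v := by
  have hunit {k : ℕ} (i : Fin s) {M : Matrix (Fin k) (Fin k) ℚ_[p i]} (hM : ‖M.det‖ = 1) :
      IsUnit M.det :=
    isUnit_iff_ne_zero.2 (norm_ne_zero_iff.1 (hM ▸ one_ne_zero))
  have hAR := mulVec_mulVec_nonsing_inv hadm.1 v.1.1
  have hCR := mulVec_add_mulVec_neg_inv_mul_mul_inv (A := h.aR) (B := h.bR) hadm.2.1 v.1.1 v.2.1
  have hAP i := mulVec_mulVec_nonsing_inv (hunit i (hadm.2.2.2.2 i).1.2) (v.1.2 i)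
  have hCP i := mulVec_add_mulVec_neg_inv_mul_mul_inv (A := h.aP i) (B := h.bP i)
    (hunit i (hadm.2.2.2.2 i).2.1.2) (v.1.2 i) (v.2.2 i)
  exact Prod.ext (Prod.ext hAR (funext hAP)) (Prod.ext hCR (funext hCP))

variable {ψ : ApproxFamily m n s p} {TR : ℝ} {TP : Fin s → ℝ}

lemma mapsTo_act_enlarged (hε₀ : 0 < ε) (hε₁ : ε ≤ 1) (hR : inHtilde m n ε h.aR h.bR h.cR)
    (hP : h.IsIntegralAtFinitePlaces) (hTR : 1 ≤ TR) (hTP : ∀ i, 1 ≤ TP i) :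
    Set.MapsTo h.act (Eprod m n p ψ.psiR ψ.psiP TR TP)
      (Eprod m n p (fun t => (1 + ε) * ψ.psiR ((1 + ε)⁻¹ * t)) ψ.psiP ((1 + ε) * TR) TP) := by
  intro v hv
  rw [mem_Eprod_iff] at hv ⊢
  exact ⟨hv.1.mulVec_enlarged hε₀ hε₁ hR ψ.antitone_psiR ψ.oneR hTR, fun i =>
    (hv.2 i).mulVec_of_norm_le_one (hP i).1 (hP i).2.1 (hP i).2.2 (ψ.antitone_psiP i)
      (ψ.oneP i) (hTP i)⟩

lemma mapsTo_act_of_shrunk (hε₀ : 0 < ε) (hε₁ : ε ≤ 1) (hR : inHtilde m n ε h.aR h.bR h.cR)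
    (hP : h.IsIntegralAtFinitePlaces) (hTR : 1 ≤ TR) (hTP : ∀ i, 1 ≤ TP i) :
    Set.MapsTo h.act
      (Eprod m n p (fun t => (1 + ε)⁻¹ * ψ.psiR ((1 + ε) * t)) ψ.psiP ((1 + ε)⁻¹ * TR) TP)
      (Eprod m n p ψ.psiR ψ.psiP TR TP) := by
  intro v hv
  rw [mem_Eprod_iff] at hv ⊢
  exact ⟨hv.1.mulVec_of_shrunk hε₀ hε₁ hR ψ.antitone_psiR ψ.oneR hTR, fun i =>
    (hv.2 i).mulVec_of_norm_le_one (hP i).1 (hP i).2.1 (hP i).2.2 (ψ.antitone_psiP i)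
      (ψ.oneP i) (hTP i)⟩

end HElem

theorem sandwich_inclusions_general
    (m n : ℕ)
    (s : ℕ) (p : Fin s → ℕ) [∀ i, Fact (p i).Prime]
    (ε : ℝ) (hε₀ : 0 < ε) (hε₁ : ε < 1)
    (h : HElem m n s p) (hadm : h.isAdmissible ε)
    (ψ : ApproxFamily m n s p)
    (TR : ℝ) (hTR : 1 ≤ TR) (TP : Fin s → ℝ) (hTP : ∀ i, ∃ k : ℕ, TP i = (p i : ℝ) ^ k) :
    Eprod m n p (fun t => (1 + ε)⁻¹ * ψ.psiR ((1 + ε) * t)) ψ.psiP ((1 + ε)⁻¹ * TR) TP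
        ⊆ h.act '' Eprod m n p ψ.psiR ψ.psiP TR TP ∧
      h.act '' Eprod m n p ψ.psiR ψ.psiP TR TP
        ⊆ Eprod m n p (fun t => (1 + ε) * ψ.psiR ((1 + ε)⁻¹ * t)) ψ.psiP ((1 + ε) * TR) TP := by
  have hTP₁ (i : Fin s) : 1 ≤ TP i := by
    obtain ⟨k, hk⟩ := hTP i
    exact hk ▸ one_le_pow₀ (Nat.one_le_cast.2 (Fact.out : (p i).Prime).one_le)
  refine ⟨fun v hv => ⟨h.inv.act v, ?_, hadm.act_inv_act v⟩, Set.MapsTo.image_subset ?_⟩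
  · exact h.inv.mapsTo_act_of_shrunk hε₀ hε₁.le hadm.2.2.2.1 hadm.inv_isIntegralAtFinitePlaces
      hTR hTP₁ hv
  · exact h.mapsTo_act_enlarged hε₀ hε₁.le hadm.2.2.1 hadm.isIntegralAtFinitePlaces hTR hTP₁

/-- **Sandwich inclusions for perturbed approximating regions.**
Let `ε ∈ (0,1)` and let `h ∈ ∏_{p ∈ S} H_p` be block lower-triangular with
`h_∞ ∈ H̃_{∞,ε} ∩ H̃_{∞,ε}⁻¹` and `h_p ∈ H_p(ℤ_p)` for all finite `p`.  Then for every
collection of approximating functions `ψ` and every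
`T ∈ ℝ_{≥1} × ∏_{p ∈ S_f} {p^k : k ∈ ℕ}`,
`E_{ψ⁻_ε}(T⁻) ⊆ h·E_ψ(T) ⊆ E_{ψ⁺_ε}(T⁺)`. -/
theorem sandwich_inclusions
    (m n : ℕ) (hm : 0 < m) (hn : 0 < n)
    (s : ℕ) (p : Fin s → ℕ) [∀ i, Fact (p i).Prime] (hpinj : Function.Injective p)
    (ε : ℝ) (hε₀ : 0 < ε) (hε₁ : ε < 1)
    (h : HElem m n s p) (hadm : h.isAdmissible ε)
    (ψ : ApproxFamily m n s p)
    (TR : ℝ) (hTR : 1 ≤ TR) (TP : Fin s → ℝ) (hTP : ∀ i, ∃ k : ℕ, TP i = (p i : ℝ) ^ k) :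
    Eprod m n p (fun t => (1 + ε)⁻¹ * ψ.psiR ((1 + ε) * t)) ψ.psiP ((1 + ε)⁻¹ * TR) TP
        ⊆ h.act '' Eprod m n p ψ.psiR ψ.psiP TR TP ∧
      h.act '' Eprod m n p ψ.psiR ψ.psiP TR TP
        ⊆ Eprod m n p (fun t => (1 + ε) * ψ.psiR ((1 + ε)⁻¹ * t)) ψ.psiP ((1 + ε) * TR) TP :=
  sandwich_inclusions_general m n s p ε hε₀ hε₁ h hadm ψ TR hTR TP hTP
end

section
/- (Counting S-integer vectors of prescribed norms) Let T = (T_p)_{p∈S} with T_∞ = ℓ_∞ p₁^{ℓ₁}⋯p_s^{ℓ_s} where ℓ_∞ ∈ ℕ_S and ℓ_i ∈ ℤ, and T_{p_i} = p_i^{k_i} with k_i ∈ ℤ for 1 ≤ i ≤ s. Then: (i) if the set {q ∈ ℤ_S^n : ‖q‖_p = T_p for all p ∈ S} is nonempty, then ℓ_i ≥ −k_i for all 1 ≤ i ≤ s; (ii) the cardinality of this set is at most 2n(2∏_{p∈S} T_p + 1)^{n−1}. -/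
open MeasureTheory Matrix

/-!
The sup norm of `q` is attained at a coordinate `q_j = ±T_∞`, and `|T_∞|_{p_i} = p_i^{-ℓ_i}`
because `ℓ_∞` is prime to `p_i`; the bound `|q_j|_{p_i} ≤ p_i^{k_i}` gives (i).
For (ii), multiplying by `N = ∏ p_i^{k_i}` makes every coordinate an integer: its valuation is
nonnegative at each `p_i` by the norm bound, and at every other prime because `q_j ∈ ℤ_S`.
So `q ↦ N q` embeds the set into the integer vectors of sup norm exactly `C = T_∞ N`; these have
all coordinates in `[-C, C]` and one of them equal to `±C`, which leaves at most
`2n (2C + 1)^{n-1}` of them.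
-/

open Finset Fintype

section SupNorm

variable {ι : Type*} [Fintype ι]

theorem exists_norm_apply_eq_pi_norm {E : Type*} [SeminormedAddGroup E] {f : ι → E}
    (hf : 0 < ‖f‖) : ∃ i, ‖f i‖ = ‖f‖ := by
  have : Nonempty ι := by
    by_contra h
    rw [not_nonempty_iff] at h
    simp [Subsingleton.elim f 0] at hf
  obtain ⟨i, -, hi⟩ := exists_mem_eq_sup univ univ_nonempty fun b => ‖f b‖₊
  exact ⟨i, by rw [Pi.norm_def, hi]; rfl⟩

theorem pi_norm_eq_of_norm_apply_eq {E F : Type*} [SeminormedAddGroup E] [SeminormedAddGroup F]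
    {f : ι → E} {g : ι → F} (h : ∀ i, ‖f i‖ = ‖g i‖) : ‖f‖ = ‖g‖ := by
  simp only [Pi.norm_def]
  congr 2
  funext i
  exact NNReal.eq (h i)

theorem card_filter_piFinset_exists_mem_le [DecidableEq ι] {α : Type*} [DecidableEq α]
    (D E : Finset α) :
    #{v ∈ piFinset fun _ : ι => D | ∃ i, v i ∈ E} ≤ card ι * #E * #D ^ (card ι - 1) := by
  calc #{v ∈ piFinset fun _ : ι => D | ∃ i, v i ∈ E}
      ≤ #(univ.biUnion fun i => E.biUnion fun e => {v ∈ piFinset fun _ : ι => D | v i = e}) := by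
        refine card_le_card fun v hv => ?_
        obtain ⟨hvD, i, hi⟩ := mem_filter.mp hv
        simp only [mem_biUnion, mem_filter]
        exact ⟨i, mem_univ i, v i, hi, hvD, rfl⟩
    _ ≤ ∑ i : ι, ∑ e ∈ E, #{v ∈ piFinset fun _ : ι => D | v i = e} :=
        card_biUnion_le.trans <| sum_le_sum fun _ _ => card_biUnion_le
    _ ≤ ∑ _i : ι, ∑ _e ∈ E, #D ^ (card ι - 1) := by
        gcongr with i _ e
        rw [card_filter_piFinset_const]
        split_ifs <;> simp
    _ = card ι * #E * #D ^ (card ι - 1) := by simp [mul_assoc]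

theorem finite_setOf_norm_eq (R : ℝ) : {v : ι → ℤ | ‖v‖ = R}.Finite :=
  (isCompact_closedBall (0 : ι → ℤ) R).finite_of_discrete.subset
    fun v (hv : ‖v‖ = R) => by simp [hv]

theorem ncard_setOf_norm_eq_natCast_le (M : ℕ) (hM : 0 < M) :
    {v : ι → ℤ | ‖v‖ = M}.ncard ≤ 2 * card ι * (2 * M + 1) ^ (card ι - 1) := by
  classical
  have hsub : {v : ι → ℤ | ‖v‖ = M} ⊆ ↑{v ∈ piFinset fun _ : ι => Icc (-(M : ℤ)) M |
      ∃ i, v i ∈ ({(M : ℤ), -(M : ℤ)} : Finset ℤ)} := by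
    intro v (hv : ‖v‖ = M)
    have hle : ∀ i, |v i| ≤ M := fun i => by
      exact_mod_cast (Int.norm_eq_abs (v i)).symm.trans_le (hv ▸ norm_le_pi_norm v i)
    obtain ⟨i, hi⟩ := exists_norm_apply_eq_pi_norm (hv ▸ (Nat.cast_pos.mpr hM))
    have hi : |v i| = M := by exact_mod_cast (Int.norm_eq_abs (v i)).symm.trans (hi.trans hv)
    simp only [coe_filter, mem_piFinset, mem_Icc, mem_insert, mem_singleton, Set.mem_ofPred_eq]
    exact ⟨fun j => abs_le.mp (hle j), i, (abs_eq (Int.natCast_nonneg M)).mp hi⟩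
  calc {v : ι → ℤ | ‖v‖ = M}.ncard
      ≤ #{v ∈ piFinset fun _ : ι => Icc (-(M : ℤ)) M |
          ∃ i, v i ∈ ({(M : ℤ), -(M : ℤ)} : Finset ℤ)} :=
        Set.ncard_coe_finset _ ▸ Set.ncard_le_ncard hsub (finite_toSet _)
    _ ≤ card ι * #({(M : ℤ), -(M : ℤ)} : Finset ℤ) * #(Icc (-(M : ℤ)) M) ^ (card ι - 1) :=
        card_filter_piFinset_exists_mem_le _ _
    _ ≤ 2 * card ι * (2 * M + 1) ^ (card ι - 1) := by
        rw [Int.card_Icc, mul_comm 2]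
        gcongr
        · exact card_le_two
        · omega

theorem ncard_setOf_norm_eq_le {R : ℝ} (hR : 0 < R) :
    ({v : ι → ℤ | ‖v‖ = R}.ncard : ℝ) ≤ 2 * card ι * (2 * R + 1) ^ (card ι - 1) := by
  rcases Set.eq_empty_or_nonempty {v : ι → ℤ | ‖v‖ = R} with hempty | ⟨v, hv⟩
  · rw [hempty, Set.ncard_empty, Nat.cast_zero]
    positivity
  obtain ⟨i, hi⟩ := exists_norm_apply_eq_pi_norm (hv ▸ hR : 0 < ‖v‖)
  have hR' : R = (v i).natAbs := by
    rw [← hv, ← hi, Int.norm_eq_abs, Nat.cast_natAbs, Int.cast_abs]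
  rw [hR'] at hR ⊢
  exact_mod_cast ncard_setOf_norm_eq_natCast_le _ (by exact_mod_cast hR)

end SupNorm

section Valuations

theorem padicValRat.finset_prod (r : ℕ) [Fact r.Prime] {ι : Type*} (t : Finset ι) {f : ι → ℚ}
    (hf : ∀ i ∈ t, f i ≠ 0) : padicValRat r (∏ i ∈ t, f i) = ∑ i ∈ t, padicValRat r (f i) := by
  classical
  induction t using Finset.induction_on with
  | empty => simp
  | insert a t ha ih =>
    rw [prod_insert ha, sum_insert ha, padicValRat.mul (hf a (mem_insert_self a t))
        (prod_ne_zero_iff.mpr fun i hi => hf i (mem_insert_of_mem hi)),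
      ih fun i hi => hf i (mem_insert_of_mem hi)]

theorem Rat.den_eq_one_of_forall_padicValRat_nonneg {x : ℚ}
    (h : ∀ r : ℕ, r.Prime → 0 ≤ padicValRat r x) : x.den = 1 := by
  by_contra hden
  obtain ⟨r, hr, hdvd⟩ := Nat.exists_prime_and_dvd hden
  have : Fact r.Prime := ⟨hr⟩
  have hnum : padicValInt r x.num = 0 := padicValInt.eq_zero_of_not_dvd fun hnum =>
    hr.one_lt.ne' <| Nat.dvd_one.mp <| x.reduced ▸
      Nat.dvd_gcd (Int.natCast_dvd.mp hnum) hdvd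
  have hden : 1 ≤ padicValNat r x.den := one_le_padicValNat_of_dvd x.den_pos.ne' hdvd
  have := h r hr
  rw [padicValRat, hnum] at this
  omega

theorem IsZS.padicValRat_nonneg {P : ℕ} {x : ℚ} (hx : IsZS P x) {r : ℕ} [Fact r.Prime]
    (hrP : ¬ r ∣ P) : 0 ≤ padicValRat r x := by
  obtain ⟨a, κ, rfl⟩ := hx
  rcases eq_or_ne a 0 with rfl | ha
  · simp
  have hP : P ≠ 0 := by rintro rfl; exact hrP (dvd_zero r)
  rw [padicValRat.div (Int.cast_ne_zero.mpr ha) (pow_ne_zero _ (Nat.cast_ne_zero.mpr hP)),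
    padicValRat.pow, padicValRat.of_nat, padicValNat.eq_zero_of_not_dvd hrP, padicValRat.of_int]
  simp

theorem neg_le_padicValRat_of_norm_le {r : ℕ} [Fact r.Prime] {x : ℚ} (hx : x ≠ 0) {e : ℤ}
    (h : ‖(x : ℚ_[r])‖ ≤ (r : ℝ) ^ e) : -e ≤ padicValRat r x := by
  rw [Padic.norm_eq_zpow_neg_valuation (by exact_mod_cast hx), Padic.valuation_ratCast,
    zpow_le_zpow_iff_right₀ (by exact_mod_cast (Fact.out : r.Prime).one_lt)] at h
  omega

variable {s : ℕ} {p : Fin s → ℕ} [∀ i, Fact (p i).Prime]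

theorem prod_zpow_pos (e : Fin s → ℤ) : (0 : ℚ) < ∏ i, (p i : ℚ) ^ e i :=
  prod_pos fun i _ => zpow_pos (Nat.cast_pos.mpr (Fact.out : (p i).Prime).pos) _

theorem padicValRat_prod_zpow (r : ℕ) [Fact r.Prime] (e : Fin s → ℤ) :
    padicValRat r (∏ i, (p i : ℚ) ^ e i) = ∑ i, if p i = r then e i else 0 := by
  have hp : ∀ i, (p i : ℚ) ≠ 0 := fun i => Nat.cast_ne_zero.mpr (Fact.out : (p i).Prime).ne_zero
  rw [padicValRat.finset_prod _ _ fun i _ => zpow_ne_zero _ (hp i)]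
  refine sum_congr rfl fun i _ => ?_
  rw [padicValRat.zpow, padicValRat.of_nat]
  split_ifs with h
  · simp [h, padicValNat_self]
  · simp [padicValNat_primes (Ne.symm h)]

theorem padicValRat_prod_zpow_self (hp : Function.Injective p) (e : Fin s → ℤ) (i : Fin s) :
    padicValRat (p i) (∏ j, (p j : ℚ) ^ e j) = e i := by
  simp [padicValRat_prod_zpow, hp.eq_iff]

theorem padicValRat_prod_zpow_of_forall_ne {r : ℕ} [Fact r.Prime] (hr : ∀ i, p i ≠ r)
    (e : Fin s → ℤ) : padicValRat r (∏ i, (p i : ℚ) ^ e i) = 0 := by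
  simp [padicValRat_prod_zpow, hr]

theorem padicValRat_natCast_mul_prod_zpow (hp : Function.Injective p) {m : ℕ} (hm : m ≠ 0)
    (hmP : m.Coprime (∏ i, p i)) (l : Fin s → ℤ) (i : Fin s) :
    padicValRat (p i) (m * ∏ j, (p j : ℚ) ^ l j) = l i := by
  have hpm : ¬ p i ∣ m := fun h => (Fact.out : (p i).Prime).one_lt.ne' <|
    Nat.dvd_one.mp <| hmP ▸ Nat.dvd_gcd h (dvd_prod_of_mem p (mem_univ i))
  rw [padicValRat.mul (Nat.cast_ne_zero.mpr hm) (prod_zpow_pos l).ne', padicValRat.of_nat,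
    padicValNat.eq_zero_of_not_dvd hpm, padicValRat_prod_zpow_self hp]
  simp

theorem den_mul_prod_zpow_eq_one (hp : Function.Injective p) (k : Fin s → ℤ) {x : ℚ}
    (hx : IsZS (∏ i, p i) x) (hk : ∀ i, ‖(x : ℚ_[p i])‖ ≤ (p i : ℝ) ^ k i) :
    (x * ∏ i, (p i : ℚ) ^ k i).den = 1 := by
  rcases eq_or_ne x 0 with rfl | hx0
  · simp
  refine Rat.den_eq_one_of_forall_padicValRat_nonneg fun r hr => ?_
  have : Fact r.Prime := ⟨hr⟩
  rw [padicValRat.mul hx0 (prod_zpow_pos k).ne']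
  by_cases hr : ∃ i, p i = r
  · obtain ⟨i, rfl⟩ := hr
    rw [padicValRat_prod_zpow_self hp]
    linarith [neg_le_padicValRat_of_norm_le hx0 (hk i)]
  · push Not at hr
    have hrP : ¬ r ∣ ∏ i, p i := fun hdvd => by
      obtain ⟨i, -, hi⟩ := (Nat.Prime.prime Fact.out).dvd_finsetProd_iff _ |>.mp hdvd
      exact hr i ((Nat.prime_dvd_prime_iff_eq Fact.out Fact.out).mp hi).symm
    rw [padicValRat_prod_zpow_of_forall_ne hr, add_zero]
    exact hx.padicValRat_nonneg hrP

end Valuations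

def sIntegerSphere (n : ℕ) {s : ℕ} (p : Fin s → ℕ) [∀ i, Fact (p i).Prime] (TR : ℝ)
    (k : Fin s → ℤ) : Set (Fin n → ℚ) :=
  {q | (∀ j, IsZS (∏ i, p i) (q j)) ∧ ‖ratR q‖ = TR ∧ ∀ i, ‖ratP p i q‖ = (p i : ℝ) ^ k i}

section SIntegerSphere

variable {n s : ℕ} {p : Fin s → ℕ} [∀ i, Fact (p i).Prime]

theorem norm_padic_le_of_mem_sIntegerSphere {TR : ℝ} {k : Fin s → ℤ} {q : Fin n → ℚ}
    (hq : q ∈ sIntegerSphere n p TR k) (i : Fin s) (j : Fin n) :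
    ‖(q j : ℚ_[p i])‖ ≤ (p i : ℝ) ^ k i :=
  (norm_le_pi_norm (ratP p i q) j).trans_eq (hq.2.2 i)

theorem norm_padic_le_of_norm_ratR_eq {r : ℕ} [Fact r.Prime] {q : Fin n → ℚ} {t : ℚ}
    (ht : 0 < t) (hq : ‖ratR q‖ = t) {e : ℤ} (hqe : ∀ j, ‖(q j : ℚ_[r])‖ ≤ (r : ℝ) ^ e) :
    ‖(t : ℚ_[r])‖ ≤ (r : ℝ) ^ e := by
  obtain ⟨j, hj⟩ := exists_norm_apply_eq_pi_norm (hq ▸ Rat.cast_pos.mpr ht : 0 < ‖ratR q‖)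
  have hqj : |q j| = |t| := by
    rw [hq, ratR, Real.norm_eq_abs, ← abs_of_pos ht] at hj
    exact_mod_cast hj
  rcases abs_eq_abs.mp hqj with h | h
  · simpa [h] using hqe j
  · simpa [h] using hqe j

theorem norm_num_mul_eq_norm_ratR_mul {q : Fin n → ℚ} {N : ℚ} (hN : 0 < N)
    (hq : ∀ j, (q j * N).den = 1) :
    ‖fun j => (q j * N).num‖ = ‖ratR q‖ * N := by
  rw [mul_comm, ← abs_of_pos (Rat.cast_pos.mpr hN : (0 : ℝ) < N), ← Real.norm_eq_abs,
    ← norm_smul]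
  refine pi_norm_eq_of_norm_apply_eq fun j => ?_
  rw [← Int.norm_cast_real, ← Rat.cast_intCast, Rat.coe_int_num_of_den_eq_one (hq j)]
  simp [ratR, mul_comm]

theorem ncard_sIntegerSphere_le (hp : Function.Injective p) {TR : ℝ} (hTR : 0 < TR)
    (k : Fin s → ℤ) :
    ((sIntegerSphere n p TR k).ncard : ℝ)
      ≤ 2 * n * (2 * (TR * ∏ i, (p i : ℝ) ^ k i) + 1) ^ (n - 1) := by
  set N : ℚ := ∏ i, (p i : ℚ) ^ k i
  have hN : 0 < N := prod_zpow_pos k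
  have hden : ∀ q ∈ sIntegerSphere n p TR k, ∀ j, (q j * N).den = 1 := fun q hq j =>
    den_mul_prod_zpow_eq_one hp k (hq.1 j) fun i => norm_padic_le_of_mem_sIntegerSphere hq i j
  have hmaps : Set.MapsTo (fun q j => (q j * N).num) (sIntegerSphere n p TR k)
      {v : Fin n → ℤ | ‖v‖ = TR * N} := fun q hq => by
    simp only [Set.mem_ofPred_eq, norm_num_mul_eq_norm_ratR_mul hN (hden q hq), hq.2.1]
  have hinj : Set.InjOn (fun q j => (q j * N).num) (sIntegerSphere n p TR k) :=
    fun q hq q' hq' h => funext fun j => by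
      have := congrArg (fun v : Fin n → ℤ => (v j : ℚ)) h
      simp only [Rat.coe_int_num_of_den_eq_one (hden q hq j),
        Rat.coe_int_num_of_den_eq_one (hden q' hq' j)] at this
      exact mul_right_cancel₀ hN.ne' this
  calc ((sIntegerSphere n p TR k).ncard : ℝ) ≤ {v : Fin n → ℤ | ‖v‖ = TR * N}.ncard :=
        Nat.cast_le.mpr (Set.ncard_le_ncard_of_injOn _ hmaps hinj (finite_setOf_norm_eq _))
    _ ≤ _ := by
        simpa [N] using ncard_setOf_norm_eq_le (ι := Fin n) (mul_pos hTR (Rat.cast_pos.mpr hN))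

end SIntegerSphere

theorem count_S_integer_vectors_of_prescribed_norms_general
    (n : ℕ)
    (s : ℕ) (p : Fin s → ℕ) [∀ i, Fact (p i).Prime] (hpinj : Function.Injective p)
    (linf : ℕ) (hlinf : 0 < linf) (hlinfS : Nat.Coprime linf (∏ i, p i))
    (l : Fin s → ℤ) (k : Fin s → ℤ)
    (TR : ℝ) (hTR : TR = (linf : ℝ) * ∏ i, (p i : ℝ) ^ (l i)) :
    ({q : Fin n → ℚ | (∀ j, IsZS (∏ i, p i) (q j)) ∧ ‖ratR q‖ = TR ∧
        ∀ i, ‖ratP p i q‖ = (p i : ℝ) ^ (k i)}.Nonempty →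
      ∀ i, -(k i) ≤ l i) ∧
    (({q : Fin n → ℚ | (∀ j, IsZS (∏ i, p i) (q j)) ∧ ‖ratR q‖ = TR ∧
        ∀ i, ‖ratP p i q‖ = (p i : ℝ) ^ (k i)}.ncard : ℝ)
      ≤ 2 * n * (2 * (TR * ∏ i, (p i : ℝ) ^ (k i)) + 1) ^ (n - 1)) := by
  change ((sIntegerSphere n p TR k).Nonempty → _) ∧ ((sIntegerSphere n p TR k).ncard : ℝ) ≤ _
  set t : ℚ := linf * ∏ i, (p i : ℚ) ^ l i
  have ht : 0 < t := mul_pos (Nat.cast_pos.mpr hlinf) (prod_zpow_pos l)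
  have hTRt : TR = t := by simp [t, hTR]
  refine ⟨fun ⟨q, hq⟩ i => ?_, ncard_sIntegerSphere_le hpinj (hTRt ▸ Rat.cast_pos.mpr ht) k⟩
  have hti := norm_padic_le_of_norm_ratR_eq ht (hq.2.1.trans hTRt)
    fun j => norm_padic_le_of_mem_sIntegerSphere hq i j
  simpa only [t, padicValRat_natCast_mul_prod_zpow hpinj hlinf.ne' hlinfS] using
    neg_le_padicValRat_of_norm_le ht.ne' hti

/-- **Counting S-integer vectors of prescribed norms.**
Let `T_∞ = ℓ_∞ p₁^{ℓ₁} ⋯ p_s^{ℓ_s}` (`ℓ_∞ ∈ ℕ_S`, `ℓ_i ∈ ℤ`) and `T_{p_i} = p_i^{k_i}`.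
Then (i) if `{q ∈ ℤ_S^n : ‖q‖_p = T_p ∀ p}` is nonempty we have `ℓ_i ≥ −k_i` for all `i`;
(ii) its cardinality is at most `2n (2∏_p T_p + 1)^{n−1}`. -/
theorem count_S_integer_vectors_of_prescribed_norms
    (n : ℕ) (hn : 0 < n)
    (s : ℕ) (p : Fin s → ℕ) [∀ i, Fact (p i).Prime] (hpinj : Function.Injective p)
    (linf : ℕ) (hlinf : 0 < linf) (hlinfS : Nat.Coprime linf (∏ i, p i))
    (l : Fin s → ℤ) (k : Fin s → ℤ)
    (TR : ℝ) (hTR : TR = (linf : ℝ) * ∏ i, (p i : ℝ) ^ (l i)) :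
    ({q : Fin n → ℚ | (∀ j, IsZS (∏ i, p i) (q j)) ∧ ‖ratR q‖ = TR ∧
        ∀ i, ‖ratP p i q‖ = (p i : ℝ) ^ (k i)}.Nonempty →
      ∀ i, -(k i) ≤ l i) ∧
    (({q : Fin n → ℚ | (∀ j, IsZS (∏ i, p i) (q j)) ∧ ‖ratR q‖ = TR ∧
        ∀ i, ‖ratP p i q‖ = (p i : ℝ) ^ (k i)}.ncard : ℝ)
      ≤ 2 * n * (2 * (TR * ∏ i, (p i : ℝ) ^ (k i)) + 1) ^ (n - 1)) :=
  count_S_integer_vectors_of_prescribed_norms_general n s p hpinj linf hlinf hlinfS l k TR hTR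
end

section
/- (Volume bound for the fiber set X_q) Let ψ = (ψ_p)_{p∈S} be a collection of approximating functions and let q = (q₁, …, q_n) ∈ ℤ_S^n be nonzero. Define X_q as the set of X = (x₁, …, x_n) ∈ ([0,1) × ∏_{p∈S_f} ℤ_p)^n for which there exists b ∈ ℤ_S such that |x₁q₁ + ⋯ + x_nq_n + b|_p ≤ ψ_p(‖q‖_p^n)^{1/m} for all p ∈ S (interpreting x_iq_i + b componentwise at each place). Then vol(X_q) ≤ 2n ∏_{p∈S} ψ_p(‖q‖_p^n)^{1/m}, where vol is the product of Lebesgue measure on [0,1)^n and the Haar measures on ℤ_p^n with total mass 1. -/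
open MeasureTheory Matrix

/-!
Fix integers `g_p` with `‖q‖_p ≤ p ^ g_p` and `ψ_p(‖q‖_p^n)^{1/m} = p ^ l_p ≤ p ^ g_p`, and put
`c = ∏_p p ^ (-g_p)`. If `b` witnesses `X ∈ X_q`, the ultrametric inequality gives
`|b|_p ≤ p ^ g_p` at every finite place, and an `S`-integer with these bounds lies in `c ℤ`.
So `X_q` is covered by the products, over `b = c k` with `k ∈ ℤ`, of a real slab
`{x ∈ [0,1)^n : |x·q + c k| ≤ δ_∞}` and `p`-adic slabs `{y ∈ ℤ_p^n : |y·q + c k|_p ≤ p ^ l_p}`.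
A `p`-adic slab has measure at most `p ^ (l_p - g_p)`, because `p ^ (g_p - l_p)` disjoint
translates of it fit into `ℤ_p^n`. Some `q_j` is a nonzero multiple `N c`, so integrating first
over `x_j ∈ [0,1)`, along which the slabs for consecutive `k` are shifted by `1 / N`, bounds the
total volume of the real slabs by `2 δ_∞ / c`. The product of the bounds is `2 δ_∞ ∏_p p ^ l_p`.
-/

open scoped ENNReal

def realSlab {n : ℕ} (a : Fin n → ℝ) (b δ : ℝ) : Set (Fin n → ℝ) :=
  {x | (∀ j, 0 ≤ x j ∧ x j < 1) ∧ |x ⬝ᵥ a + b| ≤ δ}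

def padicSlab {p : ℕ} [Fact p.Prime] {n : ℕ} (a : Fin n → ℚ_[p]) (b : ℚ_[p]) (δ : ℝ) :
    Set (Fin n → ℚ_[p]) :=
  {y | (∀ j, ‖y j‖ ≤ 1) ∧ ‖y ⬝ᵥ a + b‖ ≤ δ}

/-- The set `X_q`, with arbitrary radii `δR` at the real place and `δP i` at `p i`. -/
def fiberSet {s : ℕ} (p : Fin s → ℕ) [∀ i, Fact (p i).Prime] {n : ℕ} (q : Fin n → ℚ)
    (δR : ℝ) (δP : Fin s → ℝ) : Set ((Fin n → ℝ) × ∀ i, Fin n → ℚ_[p i]) :=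
  {x | (∀ j, 0 ≤ x.1 j ∧ x.1 j < 1) ∧ (∀ i j, ‖x.2 i j‖ ≤ 1) ∧
    ∃ b : ℚ, IsZS (∏ i, p i) b ∧ |x.1 ⬝ᵥ ratR q + b| ≤ δR ∧
      ∀ i, ‖x.2 i ⬝ᵥ ratP p i q + (b : ℚ_[p i])‖ ≤ δP i}

namespace Padic

variable {p : ℕ} [Fact p.Prime]

lemma norm_natCast_prime {r : ℕ} (hr : r.Prime) :
    ‖(r : ℚ_[p])‖ = if r = p then (p : ℝ)⁻¹ else 1 := by
  split_ifs with h
  · subst h; exact norm_p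
  · exact norm_natCast_eq_one_iff.mpr ((Nat.coprime_primes Fact.out hr).mpr (Ne.symm h))

lemma one_lt_norm_of_dvd_den {w : ℚ} (h : p ∣ w.den) : 1 < ‖(w : ℚ_[p])‖ := by
  have hnum : ¬ (p : ℤ) ∣ w.num := fun hnum =>
    (Fact.out : p.Prime).one_lt.ne'
      (Nat.eq_one_of_dvd_coprimes w.reduced (Int.natCast_dvd.mp hnum) h)
  have hnum_norm : ‖(w.num : ℚ_[p])‖ = 1 :=
    le_antisymm (norm_int_le_one _) (not_lt.mp (mt norm_intCast_lt_one_iff.mp hnum))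
  have hden : ‖(w.den : ℚ_[p])‖ < 1 := norm_natCast_lt_one_iff.mpr h
  have hden0 : (w.den : ℚ_[p]) ≠ 0 := by exact_mod_cast w.den_nz
  have hw : (w : ℚ_[p]) = w.num / w.den := by exact_mod_cast (Rat.num_div_den w).symm
  rw [hw, norm_div, hnum_norm]
  exact one_lt_one_div (norm_pos_iff.mpr hden0) hden

variable {n : ℕ}

lemma exists_norm_eq_norm_apply_eq_zpow {x : Fin n → ℚ_[p]} (hx : x ≠ 0) :
    ∃ (j : Fin n) (v : ℤ), ‖x‖ = (p : ℝ) ^ v ∧ ‖x j‖ = (p : ℝ) ^ v := by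
  obtain ⟨j₀, -⟩ := Function.ne_iff.mp hx
  obtain ⟨j, -, hj⟩ := Finset.exists_mem_eq_sup Finset.univ ⟨j₀, Finset.mem_univ _⟩
    fun i => ‖x i‖₊
  have hnorm : ‖x‖ = ‖x j‖ := by rw [Pi.norm_def, hj]; rfl
  have hxj : x j ≠ 0 := norm_ne_zero_iff.mp (hnorm ▸ norm_ne_zero_iff.mpr hx)
  exact ⟨j, -(x j).valuation, by rw [hnorm, norm_eq_zpow_neg_valuation hxj],
    norm_eq_zpow_neg_valuation hxj⟩

lemma norm_le_max_of_norm_dotProduct_add_le {y a : Fin n → ℚ_[p]} (hy : ∀ j, ‖y j‖ ≤ 1)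
    {b : ℚ_[p]} {r : ℝ} (h : ‖y ⬝ᵥ a + b‖ ≤ r) : ‖b‖ ≤ max r ‖a‖ := by
  have hdot : ‖y ⬝ᵥ a‖ ≤ ‖a‖ :=
    IsUltrametricDist.norm_sum_le_of_forall_le_of_nonneg (norm_nonneg a) fun j _ => by
      simpa [norm_mul] using mul_le_mul (hy j) (norm_le_pi_norm a j) (norm_nonneg _) zero_le_one
  calc ‖b‖ = ‖(y ⬝ᵥ a + b) + -(y ⬝ᵥ a)‖ := by rw [add_neg_cancel_comm]
    _ ≤ max r ‖a‖ := (nonarchimedean _ _).trans (max_le_max h (by rwa [norm_neg]))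

lemma zpow_neg_lt_norm_natCast_sub {a b k : ℕ} (ha : a < p ^ k) (hb : b < p ^ k) (hab : a ≠ b) :
    (p : ℝ) ^ (-(k : ℤ)) < ‖(a : ℚ_[p]) - b‖ := by
  by_contra hle
  have hdvd : ((p ^ k : ℕ) : ℤ) ∣ (a : ℤ) - b := by
    push_cast
    exact (norm_int_le_pow_iff_dvd _ k).mp (by push_cast; exact not_lt.mp hle)
  have := Int.eq_zero_of_abs_lt_dvd hdvd (by rw [abs_sub_lt_iff]; omega)
  omega

end Padic

lemma Rat.den_eq_one_of_forall_norm_padic_le_one {w : ℚ}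
    (h : ∀ (p : ℕ) [Fact p.Prime], ‖(w : ℚ_[p])‖ ≤ 1) : w.den = 1 := by
  by_contra hden
  obtain ⟨p, hp, hdvd⟩ := Nat.exists_prime_and_dvd hden
  have : Fact p.Prime := ⟨hp⟩
  exact (h p).not_gt (Padic.one_lt_norm_of_dvd_den hdvd)

lemma IsZS.norm_padic_le_one {P : ℕ} {z : ℚ} (hz : IsZS P z) {p : ℕ} [Fact p.Prime]
    (hp : ¬ p ∣ P) : ‖(z : ℚ_[p])‖ ≤ 1 := by
  obtain ⟨a, k, rfl⟩ := hz
  have hP : ‖(P : ℚ_[p])‖ = 1 :=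
    Padic.norm_natCast_eq_one_iff.mpr ((Nat.Prime.coprime_iff_not_dvd Fact.out).mpr hp)
  push_cast
  rw [norm_div, norm_pow, hP, one_pow, div_one]
  exact Padic.norm_int_le_one a

lemma IsZS.exists_eq_prod_zpow_mul_int {s : ℕ} {p : Fin s → ℕ} [hp : ∀ i, Fact (p i).Prime]
    (hpinj : Function.Injective p) {z : ℚ} (hz : IsZS (∏ i, p i) z) (g : Fin s → ℤ)
    (h : ∀ i, ‖(z : ℚ_[p i])‖ ≤ (p i : ℝ) ^ g i) :
    ∃ t : ℤ, z = (∏ i, (p i : ℚ) ^ (-g i)) * t := by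
  set w : ℚ := z * ∏ i, (p i : ℚ) ^ g i with hw_def
  have hw : ∀ (r : ℕ) [Fact r.Prime], ‖(w : ℚ_[r])‖ ≤ 1 := by
    intro r _
    have hnorm : ‖(w : ℚ_[r])‖
        = ‖(z : ℚ_[r])‖ * ∏ i, (if p i = r then (r : ℝ)⁻¹ else 1) ^ g i := by
      simp only [hw_def, Rat.cast_mul, Rat.cast_prod, Rat.cast_zpow, Rat.cast_natCast, norm_mul,
        norm_prod, norm_zpow, Padic.norm_natCast_prime (hp _).out]
    by_cases hr : ∃ i, p i = r
    · obtain ⟨i, rfl⟩ := hr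
      rw [hnorm, Finset.prod_eq_single i
        (fun j _ hj => by rw [if_neg (hpinj.ne hj), _root_.one_zpow]) (by simp), if_pos rfl,
        _root_.inv_zpow, ← div_eq_mul_inv]
      exact div_le_one_of_le₀ (h i) (by positivity)
    · simp only [not_exists] at hr
      rw [hnorm, Finset.prod_eq_one (fun i _ => by rw [if_neg (hr i), _root_.one_zpow]), mul_one]
      refine hz.norm_padic_le_one fun hdvd => ?_
      obtain ⟨i, -, hi⟩ := (Prime.dvd_finsetProd_iff (Nat.Prime.prime Fact.out) _).mp hdvd
      exact hr i ((Nat.prime_dvd_prime_iff_eq Fact.out (hp i).out).mp hi).symm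
  refine ⟨w.num, ?_⟩
  rw [Rat.coe_int_num_of_den_eq_one (Rat.den_eq_one_of_forall_norm_padic_le_one hw), hw_def,
    mul_left_comm, ← Finset.prod_mul_distrib]
  have hpne : ∀ i, (p i : ℚ) ≠ 0 := fun i => by exact_mod_cast (hp i).out.ne_zero
  simp [inv_mul_cancel₀ (zpow_ne_zero _ (hpne _))]

section PadicSlab

variable {p : ℕ} [Fact p.Prime] {n : ℕ} [MeasurableSpace ℚ_[p]] [BorelSpace ℚ_[p]]

lemma measure_padicSlab_le (μ : Measure (Fin n → ℚ_[p])) [μ.IsAddLeftInvariant]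
    (hμ : μ {y | ∀ j, ‖y j‖ ≤ 1} = 1) (a : Fin n → ℚ_[p]) (b : ℚ_[p]) {δ : ℝ} (hδ : 0 < δ)
    {j : Fin n} {k : ℕ} (hk : p ^ k * δ ≤ ‖a j‖) :
    μ (padicSlab a b δ) ≤ ((p : ℝ≥0∞) ^ k)⁻¹ := by
  set S := padicSlab a b δ
  have hS : MeasurableSet S := by
    refine IsClosed.measurableSet ?_
    simp only [S, padicSlab, Set.ofPred_and, Set.ofPred_forall]
    exact (isClosed_iInter fun j => isClosed_le (by fun_prop) continuous_const).inter
      (isClosed_le (by fun_prop) continuous_const)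
  let T : ℕ → Set (Fin n → ℚ_[p]) := fun r => (Pi.single j (-(r : ℚ_[p])) + ·) ⁻¹' S
  have hT_sub : ∀ r, T r ⊆ {y | ∀ j, ‖y j‖ ≤ 1} := by
    intro r y hy i
    set e : Fin n → ℚ_[p] := Pi.single j (-(r : ℚ_[p]))
    have he : ‖e i‖ ≤ 1 := by
      rcases eq_or_ne i j with rfl | hi
      · simpa [e] using Padic.norm_int_le_one (p := p) r
      · simp [e, Pi.single_eq_of_ne hi]
    calc ‖y i‖ = ‖(e i + y i) + -e i‖ := by rw [add_neg_cancel_comm]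
      _ ≤ 1 := (Padic.nonarchimedean _ _).trans (max_le (hy.1 i) (by rwa [norm_neg]))
  have hT_disj : (Finset.range (p ^ k) : Set ℕ).PairwiseDisjoint T := by
    intro r hr r' hr' hne
    refine Set.disjoint_left.mpr fun y hy hy' => ?_
    have hdiff : (Pi.single j (-(r : ℚ_[p])) + y) ⬝ᵥ a + b
        - ((Pi.single j (-(r' : ℚ_[p])) + y) ⬝ᵥ a + b) = ((r' : ℚ_[p]) - r) * a j := by
      simp only [add_dotProduct, single_dotProduct]
      ring
    have hle : ‖((r' : ℚ_[p]) - r) * a j‖ ≤ δ := by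
      rw [← hdiff, sub_eq_add_neg]
      exact (Padic.nonarchimedean _ _).trans (max_le hy.2 (by rw [norm_neg]; exact hy'.2))
    have hlt : δ < ‖((r' : ℚ_[p]) - r) * a j‖ := by
      have hpk : (0 : ℝ) < (p : ℝ) ^ k := pow_pos (by exact_mod_cast (Fact.out : p.Prime).pos) k
      have hr'r := Padic.zpow_neg_lt_norm_natCast_sub (Finset.mem_range.mp hr')
        (Finset.mem_range.mp hr) (Ne.symm hne)
      rw [_root_.zpow_neg, zpow_natCast] at hr'r
      rw [norm_mul]
      calc δ = ((p : ℝ) ^ k)⁻¹ * (p ^ k * δ) := by field_simp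
        _ < ‖(r' : ℚ_[p]) - r‖ * ‖a j‖ := mul_lt_mul hr'r hk (by positivity) (norm_nonneg _)
    exact hle.not_gt hlt
  have hmul : ((p : ℝ≥0∞) ^ k) * μ S ≤ 1 := calc
    ((p : ℝ≥0∞) ^ k) * μ S = ∑ r ∈ Finset.range (p ^ k), μ (T r) := by
      simp [T, measure_preimage_add]
    _ = μ (⋃ r ∈ Finset.range (p ^ k), T r) :=
      (measure_biUnion_finset hT_disj fun r _ => measurable_const_add _ hS).symm
    _ ≤ μ {y | ∀ j, ‖y j‖ ≤ 1} := measure_mono (Set.iUnion₂_subset fun r _ => hT_sub r)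
    _ = 1 := hμ
  exact ENNReal.le_inv_iff_mul_le.mpr (by rwa [mul_comm])

lemma measure_padicSlab_le_zpow (μ : Measure (Fin n → ℚ_[p])) [μ.IsAddLeftInvariant]
    (hμ : μ {y | ∀ j, ‖y j‖ ≤ 1} = 1) (a : Fin n → ℚ_[p]) (b : ℚ_[p]) {j : Fin n} {v l : ℤ}
    (hj : ‖a j‖ = (p : ℝ) ^ v) :
    μ (padicSlab a b ((p : ℝ) ^ l)) ≤ ENNReal.ofReal ((p : ℝ) ^ (l - max v l)) := by
  have hp : (0 : ℝ) < p := by exact_mod_cast (Fact.out : p.Prime).pos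
  rcases lt_or_ge l v with hlv | hvl
  · obtain ⟨k, hk⟩ : ∃ k : ℕ, (k : ℤ) = v - l := ⟨(v - l).toNat, Int.toNat_of_nonneg (by omega)⟩
    have hsep : (p : ℝ) ^ k * (p : ℝ) ^ l ≤ ‖a j‖ := by
      rw [hj, ← zpow_natCast, ← zpow_add₀ hp.ne', hk, sub_add_cancel]
    calc _ ≤ ((p : ℝ≥0∞) ^ k)⁻¹ := measure_padicSlab_le μ hμ a b (zpow_pos hp l) hsep
      _ = ENNReal.ofReal ((p : ℝ) ^ (l - max v l)) := by
        rw [max_eq_left hlv.le, ← neg_sub, ← hk, _root_.zpow_neg, zpow_natCast,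
          ENNReal.ofReal_inv_of_pos (by positivity), ENNReal.ofReal_pow hp.le,
          ENNReal.ofReal_natCast]
  · rw [max_eq_right hvl, sub_self, zpow_zero, ENNReal.ofReal_one, ← hμ]
    exact measure_mono fun y hy => hy.1

end PadicSlab

lemma tsum_indicator_Ico_sub_div_natCast_le (u : ℝ) {M : ℕ} (hM : 0 < M) :
    ∑' k : ℤ, (Set.Ico (0 : ℝ) 1).indicator 1 (u - k / M) ≤ (M : ℝ≥0∞) := by
  have hM' : (0 : ℝ) < M := by exact_mod_cast hM
  set F := Finset.Ioc (⌊u * M⌋ - M) ⌊u * M⌋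
  have hout : ∀ k ∉ F, (Set.Ico (0 : ℝ) 1).indicator (1 : ℝ → ℝ≥0∞) (u - k / M) = 0 := by
    intro k hk
    refine Set.indicator_of_notMem (fun (h : u - k / M ∈ Set.Ico 0 1) => hk ?_) _
    obtain ⟨h0, h1⟩ := h
    refine Finset.mem_Ioc.mpr ⟨?_, ?_⟩
    · have h1' := mul_lt_mul_of_pos_right h1 hM'
      rw [sub_mul, div_mul_cancel₀ _ hM'.ne', one_mul] at h1'
      have : ((⌊u * M⌋ - M : ℤ) : ℝ) < k := by
        push_cast
        linarith [Int.floor_le (u * M)]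
      exact_mod_cast this
    · rw [sub_nonneg, div_le_iff₀ hM'] at h0
      exact Int.le_floor.mpr h0
  calc ∑' k : ℤ, (Set.Ico (0 : ℝ) 1).indicator 1 (u - k / M)
      = ∑ k ∈ F, (Set.Ico (0 : ℝ) 1).indicator (1 : ℝ → ℝ≥0∞) (u - k / M) := tsum_eq_sum hout
    _ ≤ ∑ _k ∈ F, (1 : ℝ≥0∞) := Finset.sum_le_sum fun k _ =>
        Set.indicator_apply_le' (fun _ => le_rfl) (fun _ => zero_le_one)
    _ = M := by simp [F]

lemma tsum_indicator_Ico_sub_div_intCast_le (u : ℝ) {N : ℤ} (hN : N ≠ 0) :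
    ∑' k : ℤ, (Set.Ico (0 : ℝ) 1).indicator 1 (u - k / N) ≤ (N.natAbs : ℝ≥0∞) := by
  obtain ⟨M, rfl | rfl⟩ := Int.eq_nat_or_neg N
  · simpa using tsum_indicator_Ico_sub_div_natCast_le u (by omega : 0 < M)
  · rw [← (Equiv.neg ℤ).tsum_eq]
    simpa [neg_div_neg_eq] using tsum_indicator_Ico_sub_div_natCast_le u (by omega : 0 < M)

lemma tsum_volume_Ico_inter_preimage_add_div_le {N : ℤ} (hN : N ≠ 0) (J : Set ℝ) :
    ∑' k : ℤ, volume (Set.Ico (0 : ℝ) 1 ∩ (· + k / N) ⁻¹' J) ≤ N.natAbs * volume J := by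
  have hslice : ∀ k : ℤ, volume (Set.Ico (0 : ℝ) 1 ∩ (· + k / N) ⁻¹' J)
      = ∫⁻ u in J, (Set.Ico (0 : ℝ) 1).indicator 1 (u - k / N) := by
    intro k
    have hmeas : MeasurableSet ((· - (k / N : ℝ)) ⁻¹' Set.Ico 0 1) :=
      measurableSet_Ico.preimage (measurable_sub_const _)
    have hset : Set.Ico (0 : ℝ) 1 ∩ (· + k / N) ⁻¹' J
        = (· + (k / N : ℝ)) ⁻¹' ((· - (k / N : ℝ)) ⁻¹' Set.Ico 0 1 ∩ J) := by
      ext t; simp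
    rw [hset, measure_preimage_add_right, ← Measure.restrict_apply hmeas,
      ← lintegral_indicator_one hmeas]
    rfl
  calc ∑' k : ℤ, volume (Set.Ico (0 : ℝ) 1 ∩ (· + k / N) ⁻¹' J)
      = ∫⁻ u in J, ∑' k : ℤ, (Set.Ico (0 : ℝ) 1).indicator 1 (u - k / N) := by
        rw [lintegral_tsum (f := fun (k : ℤ) (u : ℝ) => (Set.Ico (0 : ℝ) 1).indicator 1 (u - k / N))
          fun k => ((measurable_one.indicator measurableSet_Ico).comp
            (measurable_sub_const _)).aemeasurable]
        exact tsum_congr hslice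
    _ ≤ ∫⁻ _u in J, (N.natAbs : ℝ≥0∞) :=
        lintegral_mono fun u => tsum_indicator_Ico_sub_div_intCast_le u hN
    _ = N.natAbs * volume J := setLIntegral_const _ _

lemma tsum_volume_Ico_slab_le {N : ℤ} (hN : N ≠ 0) {c : ℝ} (hc : 0 < c) (β δ : ℝ) :
    ∑' k : ℤ, volume {t : ℝ | t ∈ Set.Ico 0 1 ∧ |t * (N * c) + β + c * k| ≤ δ}
      ≤ ENNReal.ofReal (2 * δ / c) := by
  have hNc : (N : ℝ) * c ≠ 0 := mul_ne_zero (Int.cast_ne_zero.mpr hN) hc.ne'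
  have hset : ∀ k : ℤ, {t : ℝ | t ∈ Set.Ico 0 1 ∧ |t * (N * c) + β + c * k| ≤ δ}
      = Set.Ico 0 1 ∩ (· + (k / N : ℝ)) ⁻¹' Metric.closedBall (-β / (N * c)) (δ / |N * c|) := by
    intro k
    ext t
    have hfactor : t * (N * c) + β + c * k = (N * c) * (t + k / N - -β / (N * c)) := by
      field_simp
      ring
    simp only [Set.mem_ofPred_eq, Set.mem_inter_iff, Set.mem_preimage, Metric.mem_closedBall,
      Real.dist_eq, hfactor]
    rw [abs_mul, mul_comm, ← le_div_iff₀ (abs_pos.mpr hNc)]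
  calc ∑' k : ℤ, volume {t : ℝ | t ∈ Set.Ico 0 1 ∧ |t * (N * c) + β + c * k| ≤ δ}
      ≤ N.natAbs * volume (Metric.closedBall (-β / (N * c)) (δ / |N * c|)) := by
        simp_rw [hset]
        exact tsum_volume_Ico_inter_preimage_add_div_le hN _
    _ = ENNReal.ofReal (2 * δ / c) := by
        rw [Real.volume_closedBall, ← ENNReal.ofReal_natCast, ← ENNReal.ofReal_mul (by positivity),
          Nat.cast_natAbs, Int.cast_abs, abs_mul, abs_of_pos hc]
        congr 1
        field_simp

lemma lintegral_le_of_forall_lintegral_insertNth_le {n : ℕ} (j : Fin (n + 1))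
    {f : (Fin (n + 1) → ℝ) → ℝ≥0∞} (hf : Measurable f)
    (hsupp : Function.support f ⊆ Set.univ.pi fun _ => Set.Ico 0 1) {C : ℝ≥0∞}
    (h : ∀ y : Fin n → ℝ, ∫⁻ t, f (j.insertNth t y) ≤ C) :
    ∫⁻ x, f x ≤ C := by
  set cube := Set.univ.pi fun _ : Fin n => Set.Ico (0 : ℝ) 1
  have hslice : ∀ y, ∫⁻ t, f (j.insertNth t y) ≤ cube.indicator (fun _ => C) y := by
    intro y
    by_cases hy : y ∈ cube
    · rw [Set.indicator_of_mem hy]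
      exact h y
    · have hzero : ∀ t, f (j.insertNth t y) = 0 := fun t => by
        by_contra hne
        exact hy fun i _ => by simpa using hsupp hne (j.succAbove i) (Set.mem_univ _)
      simp [hzero, Set.indicator_of_notMem hy]
  have he := (volume_preserving_piFinSuccAbove (fun _ : Fin (n + 1) => ℝ) j).symm
  calc ∫⁻ x, f x = ∫⁻ z : ℝ × (Fin n → ℝ), f (j.insertNth z.1 z.2) :=
        (he.lintegral_comp_emb (MeasurableEquiv.measurableEmbedding _) f).symm
    _ = ∫⁻ y, ∫⁻ t, f (j.insertNth t y) :=
        lintegral_prod_symm' _ (hf.comp (MeasurableEquiv.piFinSuccAbove _ j).symm.measurable)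
    _ ≤ ∫⁻ y, cube.indicator (fun _ => C) y := lintegral_mono hslice
    _ = C := by
        rw [lintegral_indicator_const (MeasurableSet.univ_pi fun _ => measurableSet_Ico),
          Real.volume_pi_Ico]
        simp

lemma tsum_volume_realSlab_le {n : ℕ} (a : Fin n → ℝ) {j : Fin n} {N : ℤ} (hN : N ≠ 0)
    {c : ℝ} (hc : 0 < c) (ha : a j = N * c) (δ : ℝ) :
    ∑' k : ℤ, volume (realSlab a (c * k) δ) ≤ ENNReal.ofReal (2 * δ / c) := by
  obtain ⟨n, rfl⟩ : ∃ m, n = m + 1 := ⟨n - 1, by have := j.pos; omega⟩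
  set A : ℤ → Set (Fin (n + 1) → ℝ) := fun k => realSlab a (c * k) δ
  have hA : ∀ k, MeasurableSet (A k) := fun k => by
    simp only [A, realSlab, Set.ofPred_and, Set.ofPred_forall]
    exact (MeasurableSet.iInter fun i =>
      (measurableSet_le measurable_const (measurable_pi_apply i)).inter
        (measurableSet_lt (measurable_pi_apply i) measurable_const)).inter
      (measurableSet_le (by fun_prop) measurable_const)
  have hdot : ∀ (t : ℝ) (y : Fin n → ℝ),
      j.insertNth t y ⬝ᵥ a = t * a j + y ⬝ᵥ fun i => a (j.succAbove i) := fun t y => by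
    simp [dotProduct, Fin.sum_univ_succAbove _ j]
  calc ∑' k : ℤ, volume (A k) = ∫⁻ x, ∑' k : ℤ, (A k).indicator 1 x := by
        rw [lintegral_tsum fun k => (measurable_one.indicator (hA k)).aemeasurable]
        simp only [lintegral_indicator_one (hA _)]
    _ ≤ ENNReal.ofReal (2 * δ / c) := by
        refine lintegral_le_of_forall_lintegral_insertNth_le j
          (Measurable.tsum fun k => measurable_one.indicator (hA k)) ?_ fun y => ?_
        · intro x hx
          by_contra hx_cube
          exact hx (ENNReal.tsum_eq_zero.mpr fun k =>
            Set.indicator_of_notMem (fun hxk => hx_cube fun i _ => hxk.1 i) _)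
        have hline : Measurable fun t : ℝ => (j.insertNth t y : Fin (n + 1) → ℝ) :=
          (MeasurableEquiv.piFinSuccAbove (fun _ => ℝ) j).symm.measurable.comp
            measurable_prodMk_right
        calc ∫⁻ t, ∑' k : ℤ, (A k).indicator 1 (j.insertNth t y)
            = ∑' k : ℤ, volume ((fun t => j.insertNth t y) ⁻¹' A k) := by
              rw [lintegral_tsum (f := fun (k : ℤ) t => (A k).indicator 1 (j.insertNth t y))
                fun k => ((measurable_one.indicator (hA k)).comp hline).aemeasurable]
              exact tsum_congr fun k => lintegral_indicator_one ((hA k).preimage hline)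
          _ ≤ ∑' k : ℤ, volume {t : ℝ | t ∈ Set.Ico 0 1 ∧
                |t * (N * c) + (y ⬝ᵥ fun i => a (j.succAbove i)) + c * k| ≤ δ} :=
              ENNReal.tsum_le_tsum fun k => measure_mono fun t ht =>
                ⟨by simpa using ht.1 j, by rw [← ha, ← hdot]; exact ht.2⟩
          _ ≤ ENNReal.ofReal (2 * δ / c) := tsum_volume_Ico_slab_le hN hc _ δ

lemma measure_iUnion_prod_pi_le {κ α ι : Type*} [Countable κ] [Fintype ι] {β : ι → Type*}
    [MeasurableSpace α] [∀ i, MeasurableSpace (β i)] (μ : Measure α) [SigmaFinite μ]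
    (ν : ∀ i, Measure (β i)) [∀ i, SigmaFinite (ν i)] (A : κ → Set α)
    (B : κ → ∀ i, Set (β i)) {C : ι → ℝ≥0∞} (hB : ∀ k i, ν i (B k i) ≤ C i) :
    (μ.prod (Measure.pi ν)) (⋃ k, A k ×ˢ Set.univ.pi (B k)) ≤ (∑' k, μ (A k)) * ∏ i, C i :=
  calc (μ.prod (Measure.pi ν)) (⋃ k, A k ×ˢ Set.univ.pi (B k))
      ≤ ∑' k, μ (A k) * ∏ i, ν i (B k i) := by
        refine (measure_iUnion_le _).trans (le_of_eq (tsum_congr fun k => ?_))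
        rw [Measure.prod_prod, Measure.pi_pi]
    _ ≤ ∑' k, μ (A k) * ∏ i, C i := by
        gcongr with k i
        exact hB k i
    _ = (∑' k, μ (A k)) * ∏ i, C i := ENNReal.tsum_mul_right

section FiberSet

variable {s : ℕ} {p : Fin s → ℕ} [∀ i, Fact (p i).Prime] {n : ℕ}

lemma fiberSet_subset_iUnion_prod_slab (hpinj : Function.Injective p) (q : Fin n → ℚ) (δ : ℝ)
    {v l g : Fin s → ℤ} (hv : ∀ i, ‖ratP p i q‖ ≤ (p i : ℝ) ^ v i) (hvg : ∀ i, v i ≤ g i)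
    (hlg : ∀ i, l i ≤ g i) :
    fiberSet p q δ (fun i => (p i : ℝ) ^ l i) ⊆
      ⋃ k : ℤ, realSlab (ratR q) (((∏ i, (p i : ℚ) ^ (-g i)) * k : ℚ)) δ ×ˢ
        Set.univ.pi fun i => padicSlab (ratP p i q) (((∏ i, (p i : ℚ) ^ (-g i)) * k : ℚ))
          ((p i : ℝ) ^ l i) := by
  have hp1 : ∀ i, (1 : ℝ) ≤ p i := fun i => by exact_mod_cast (Fact.out : (p i).Prime).one_lt.le
  rintro ⟨x, y⟩ ⟨hx, hy, b, hb, hbR, hbP⟩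
  obtain ⟨k, rfl⟩ := IsZS.exists_eq_prod_zpow_mul_int hpinj hb g fun i =>
    (Padic.norm_le_max_of_norm_dotProduct_add_le (hy i) (hbP i)).trans <|
      max_le (zpow_le_zpow_right₀ (hp1 i) (hlg i))
        ((hv i).trans (zpow_le_zpow_right₀ (hp1 i) (hvg i)))
  exact Set.mem_iUnion.mpr ⟨k, ⟨hx, hbR⟩, fun i _ => ⟨hy i, hbP i⟩⟩

lemma volume_fiberSet_le (hpinj : Function.Injective p)
    [∀ i, MeasurableSpace ℚ_[p i]] [∀ i, BorelSpace ℚ_[p i]]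
    (μn : ∀ i, Measure (Fin n → ℚ_[p i])) [∀ i, (μn i).IsAddHaarMeasure]
    (hμn : ∀ i, μn i {y | ∀ j, ‖y j‖ ≤ 1} = 1)
    {q : Fin n → ℚ} (hq : ∀ j, IsZS (∏ i, p i) (q j)) (hq0 : q ≠ 0) (δ : ℝ)
    {v l : Fin s → ℤ} {j₁ : Fin s → Fin n} (hv : ∀ i, ‖ratP p i q‖ ≤ (p i : ℝ) ^ v i)
    (hvj : ∀ i, ‖ratP p i q (j₁ i)‖ = (p i : ℝ) ^ v i) :
    ((volume : Measure (Fin n → ℝ)).prod (Measure.pi μn)) (fiberSet p q δ fun i => (p i : ℝ) ^ l i)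
      ≤ ENNReal.ofReal (2 * (δ * ∏ i, (p i : ℝ) ^ l i)) := by
  have hp : ∀ i, (0 : ℝ) < p i := fun i => by exact_mod_cast (Fact.out : (p i).Prime).pos
  set g : Fin s → ℤ := fun i => max (v i) (l i)
  set c : ℚ := ∏ i, (p i : ℚ) ^ (-g i)
  have hcR : (c : ℝ) = ∏ i, (p i : ℝ) ^ (-g i) := by
    simp only [c, Rat.cast_prod, Rat.cast_zpow, Rat.cast_natCast]
  have hc : (0 : ℝ) < c := hcR ▸ Finset.prod_pos fun i _ => zpow_pos (hp i) _
  obtain ⟨j₀, hj₀⟩ := Function.ne_iff.mp hq0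
  obtain ⟨N, hN⟩ := IsZS.exists_eq_prod_zpow_mul_int hpinj (hq j₀) g fun i =>
    (norm_le_pi_norm (ratP p i q) j₀).trans
      ((hv i).trans (zpow_le_zpow_right₀ (by exact_mod_cast (Fact.out : (p i).Prime).one_lt.le)
        (le_max_left _ _)))
  have hN0 : N ≠ 0 := by
    rintro rfl
    exact hj₀ (by simpa using hN)
  have hprod : ∏ i, (p i : ℝ) ^ (l i - g i) = (∏ i, (p i : ℝ) ^ l i) * c := by
    rw [hcR, ← Finset.prod_mul_distrib]
    exact Finset.prod_congr rfl fun i _ => by rw [sub_eq_add_neg, zpow_add₀ (hp i).ne']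
  calc _ ≤ _ := measure_mono (fiberSet_subset_iUnion_prod_slab hpinj q δ hv
        (fun i => le_max_left (v i) (l i)) fun i => le_max_right (v i) (l i))
    _ ≤ (∑' k : ℤ, volume (realSlab (ratR q) (c * k : ℚ) δ)) *
          ∏ i, ENNReal.ofReal ((p i : ℝ) ^ (l i - g i)) :=
        measure_iUnion_prod_pi_le _ _ _ _ fun k i =>
          measure_padicSlab_le_zpow (μn i) (hμn i) _ _ (hvj i)
    _ ≤ ENNReal.ofReal (2 * δ / c) * ∏ i, ENNReal.ofReal ((p i : ℝ) ^ (l i - g i)) := by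
        gcongr
        simp only [Rat.cast_mul, Rat.cast_intCast]
        exact tsum_volume_realSlab_le (ratR q) (j := j₀) hN0 hc (by simp [ratR, hN, c, mul_comm]) δ
    _ = ENNReal.ofReal (2 * (δ * ∏ i, (p i : ℝ) ^ l i)) := by
        rw [← ENNReal.ofReal_prod_of_nonneg fun i _ => by positivity,
          ← ENNReal.ofReal_mul' (by positivity), hprod]
        congr 1
        field_simp

end FiberSet

lemma ApproxFamily.exists_ratP_norm_eq_zpow {m n s : ℕ} {p : Fin s → ℕ}
    [∀ i, Fact (p i).Prime] (ψ : ApproxFamily m n s p) (hm : 0 < m) {q : Fin n → ℚ}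
    (hq0 : q ≠ 0) (i : Fin s) :
    ∃ (j : Fin n) (v l : ℤ), ‖ratP p i q‖ = (p i : ℝ) ^ v ∧ ‖ratP p i q j‖ = (p i : ℝ) ^ v ∧
      ψ.psiP i (‖ratP p i q‖ ^ n) ^ (1 / (m : ℝ)) = (p i : ℝ) ^ l := by
  obtain ⟨j₀, hj₀⟩ := Function.ne_iff.mp hq0
  have hqi : ratP p i q ≠ 0 := fun h => hj₀ (by simpa [ratP] using congrFun h j₀)
  obtain ⟨j, v, hv, hvj⟩ := Padic.exists_norm_eq_norm_apply_eq_zpow hqi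
  obtain ⟨l, hl⟩ := ψ.valsP i (v * n)
  refine ⟨j, v, l, hv, hvj, ?_⟩
  have hm' : (m : ℝ) ≠ 0 := by exact_mod_cast hm.ne'
  rw [hv, ← zpow_natCast, ← _root_.zpow_mul, hl, ← Real.rpow_intCast,
    ← Real.rpow_mul (Nat.cast_nonneg _), ← Real.rpow_intCast]
  congr 1
  push_cast
  field_simp

/-- **Volume bound for the fiber set `X_q`.**  For nonzero `q ∈ ℤ_S^n`,
the set `X_q` of `X ∈ ([0,1) × ∏_p ℤ_p)^n` for which there exists `b ∈ ℤ_S` with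
`|x₁q₁ + ⋯ + x_nq_n + b|_p ≤ ψ_p(‖q‖_p^n)^{1/m}` at all places has volume at most
`2n ∏_p ψ_p(‖q‖_p^n)^{1/m}`. -/
theorem volume_bound_fiber_set
    (m n : ℕ) (hm : 0 < m) (hn : 0 < n)
    (s : ℕ) (p : Fin s → ℕ) [∀ i, Fact (p i).Prime] (hpinj : Function.Injective p)
    [∀ i, MeasurableSpace ℚ_[p i]] [∀ i, BorelSpace ℚ_[p i]]
    (ψ : ApproxFamily m n s p)
    -- Haar measure on `ℚ_S^n`, normalized so that `ℤ_p^n` has measure one at each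
    -- finite place:
    (μn : ∀ i, Measure (Fin n → ℚ_[p i])) [∀ i, (μn i).IsAddHaarMeasure]
    (hμn : ∀ i, μn i {y | ∀ j, ‖y j‖ ≤ 1} = 1)
    (q : Fin n → ℚ) (hq : ∀ j, IsZS (∏ i, p i) (q j)) (hq0 : q ≠ 0) :
    ((volume : Measure (Fin n → ℝ)).prod (Measure.pi μn))
        {x : (Fin n → ℝ) × (∀ i, Fin n → ℚ_[p i]) |
          (∀ j, 0 ≤ x.1 j ∧ x.1 j < 1) ∧ (∀ i j, ‖x.2 i j‖ ≤ 1) ∧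
          ∃ b : ℚ, IsZS (∏ i, p i) b ∧
            |∑ j, x.1 j * (q j : ℝ) + (b : ℝ)| ≤ ψ.psiR (‖ratR q‖ ^ n) ^ (1 / (m : ℝ)) ∧
            ∀ i, ‖∑ j, x.2 i j * ((q j : ℚ) : ℚ_[p i]) + ((b : ℚ) : ℚ_[p i])‖
              ≤ ψ.psiP i (‖ratP p i q‖ ^ n) ^ (1 / (m : ℝ))}
      ≤ ENNReal.ofReal (2 * n * (ψ.psiR (‖ratR q‖ ^ n) ^ (1 / (m : ℝ))
          * ∏ i, ψ.psiP i (‖ratP p i q‖ ^ n) ^ (1 / (m : ℝ)))) := by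
  choose j₁ v l hv hvj hl using ψ.exists_ratP_norm_eq_zpow hm hq0
  simp only [hl]
  set δ := ψ.psiR (‖ratR q‖ ^ n) ^ (1 / (m : ℝ))
  have hδ : 0 ≤ δ := (Real.rpow_pos_of_pos (ψ.posR _) _).le
  refine (volume_fiberSet_le hpinj μn hμn hq hq0 δ (fun i => (hv i).le) hvj).trans
    (ENNReal.ofReal_le_ofReal ?_)
  have hn' : (1 : ℝ) ≤ n := by exact_mod_cast hn
  have hprod : 0 ≤ δ * ∏ i, (p i : ℝ) ^ l i := by positivity
  nlinarith
end

section
/- (p-adic linear-form sublevel measure bound) Let p be a prime, q = (q₁, …, q_n) ∈ ℚ_p^n with ‖q‖_p > 1, and let c ∈ p^{ℤ} with c ≤ 1. Then the Haar measure (normalized so ℤ_p^n has measure 1) of the set { (x₁,…,x_n) ∈ ℤ_p^n : |x₁q₁ + ⋯ + x_nq_n|_p ≤ c } is at most c/‖q‖_p. -/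
open MeasureTheory Matrix

open ENNReal in
/-- **p-adic linear-form sublevel measure bound.**  For `q ∈ ℚ_p^n` with `‖q‖_p > 1`
and `c ∈ p^ℤ` with `c ≤ 1`, the Haar measure (with `ℤ_p^n` of measure one) of
`{x ∈ ℤ_p^n : |x₁q₁ + ⋯ + x_nq_n|_p ≤ c}` is at most `c/‖q‖_p`. -/
theorem padic_linear_form_sublevel_bound
    (p : ℕ) [Fact p.Prime] (n : ℕ) (hn : 0 < n)
    [MeasurableSpace ℚ_[p]] [BorelSpace ℚ_[p]]
    (μ : Measure (Fin n → ℚ_[p])) [μ.IsAddHaarMeasure]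
    (hμ : μ {y | ∀ j, ‖y j‖ ≤ 1} = 1)
    (q : Fin n → ℚ_[p]) (hq : 1 < ‖q‖)
    (c : ℝ) (hc : ∃ k : ℤ, c = (p : ℝ) ^ k) (hc1 : c ≤ 1) :
    μ {x : Fin n → ℚ_[p] | (∀ j, ‖x j‖ ≤ 1) ∧ ‖∑ j, x j * q j‖ ≤ c}
      ≤ ENNReal.ofReal (c / ‖q‖) := by
    classical
  obtain ⟨k, hck⟩ := hc
  have hp1 : (1 : ℝ) < p := by exact_mod_cast (Fact.out : p.Prime).one_lt
  have hp0 : (0 : ℝ) < p := lt_trans one_pos hp1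
  -- find the max coordinate
  have hne : (Finset.univ : Finset (Fin n)).Nonempty := ⟨⟨0, hn⟩, Finset.mem_univ _⟩
  obtain ⟨j₀, -, hj₀⟩ := Finset.exists_mem_eq_sup Finset.univ hne (fun j => ‖q j‖₊)
  have hqn : ‖q‖ = ‖q j₀‖ := by
    rw [Pi.norm_def, hj₀]; rfl
  have hq1 : 1 < ‖q j₀‖ := hqn ▸ hq
  have hq0 : q j₀ ≠ 0 := by
    intro h; rw [h, norm_zero] at hq1; linarith
  set v : ℤ := -(q j₀).valuation with hv
  have hqval : ‖q j₀‖ = (p : ℝ) ^ v := Padic.norm_eq_zpow_neg_valuation hq0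
  have hv0 : 0 < v := by
    by_contra h
    push_neg at h
    have : (p : ℝ) ^ v ≤ (p : ℝ) ^ (0 : ℤ) := zpow_le_zpow_right₀ (le_of_lt hp1) h
    rw [zpow_zero] at this
    rw [hqval] at hq1; linarith
  have hk0 : k ≤ 0 := by
    by_contra h
    push_neg at h
    have : (p : ℝ) ^ (0 : ℤ) < (p : ℝ) ^ k := zpow_lt_zpow_right₀ hp1 h
    rw [zpow_zero] at this
    rw [hck] at hc1; linarith
  set N : ℕ := (v - k).toNat with hNdef
  have hNZ : (N : ℤ) = v - k := Int.toNat_of_nonneg (by omega)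
  set S : Set (Fin n → ℚ_[p]) :=
    {x : Fin n → ℚ_[p] | (∀ j, ‖x j‖ ≤ 1) ∧ ‖∑ j, x j * q j‖ ≤ c} with hS
  -- measurability of S
  have hSclosed : IsClosed S := by
    have h1 : IsClosed {x : Fin n → ℚ_[p] | ∀ j, ‖x j‖ ≤ 1} := by
      have : {x : Fin n → ℚ_[p] | ∀ j, ‖x j‖ ≤ 1} = ⋂ j, {x | ‖x j‖ ≤ 1} := by
        ext x; simp
      rw [this]
      exact isClosed_iInter fun j =>
        isClosed_le (by fun_prop) continuous_const
    have h2 : IsClosed {x : Fin n → ℚ_[p] | ‖∑ j, x j * q j‖ ≤ c} :=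
      isClosed_le (by fun_prop) continuous_const
    exact h1.inter h2
  have hSmeas : MeasurableSet S := hSclosed.measurableSet
  -- translations
  set t : ℕ → (Fin n → ℚ_[p]) := fun a => Pi.single j₀ ((a : ℚ_[p])) with ht
  set T : ℕ → Set (Fin n → ℚ_[p]) := fun a => (fun x => t a + x) ⁻¹' S with hT
  have hsum : ∀ (a : ℕ) (x : Fin n → ℚ_[p]),
      ∑ j, (t a + x) j * q j = (a : ℚ_[p]) * q j₀ + ∑ j, x j * q j := by
    intro a x
    simp only [Pi.add_apply, add_mul]
    rw [Finset.sum_add_distrib]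
    congr 1
    simp [ht, Pi.single_apply, Finset.sum_ite_eq']
  have htnorm : ∀ (a : ℕ) (j : Fin n), ‖t a j‖ ≤ 1 := by
    intro a j
    simp only [ht, Pi.single_apply]
    split
    · exact_mod_cast Padic.norm_int_le_one ((a : ℤ))
    · simp
  -- T a ⊆ cube
  have hTsub : ∀ a, T a ⊆ {y | ∀ j, ‖y j‖ ≤ 1} := by
    intro a x hx j
    have h1 : ‖(t a + x) j‖ ≤ 1 := hx.1 j
    have : x j = (t a + x) j - t a j := by simp
    rw [this]
    calc ‖(t a + x) j - t a j‖ ≤ max ‖(t a + x) j‖ ‖t a j‖ := by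
          have := Padic.nonarchimedean ((t a + x) j) (-(t a j))
          simpa [sub_eq_add_neg] using this
      _ ≤ 1 := max_le h1 (htnorm a j)
  -- disjointness
  have hdisj : (↑(Finset.range (p ^ N)) : Set ℕ).PairwiseDisjoint T := by
    intro a ha b hb hab
    simp only [Finset.coe_range, Set.mem_Iio] at ha hb
    refine Set.disjoint_left.2 fun x hxa hxb => hab ?_
    have h1 : ‖(a : ℚ_[p]) * q j₀ + ∑ j, x j * q j‖ ≤ c := by
      have := hxa.2; rwa [hsum] at this
    have h2 : ‖(b : ℚ_[p]) * q j₀ + ∑ j, x j * q j‖ ≤ c := by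
      have := hxb.2; rwa [hsum] at this
    have hdiff : ‖((a : ℚ_[p]) - b) * q j₀‖ ≤ c := by
      have heq : ((a : ℚ_[p]) - b) * q j₀ =
          ((a : ℚ_[p]) * q j₀ + ∑ j, x j * q j) + (-((b : ℚ_[p]) * q j₀ + ∑ j, x j * q j)) := by
        ring
      rw [heq]
      calc ‖_ + _‖ ≤ max ‖(a : ℚ_[p]) * q j₀ + ∑ j, x j * q j‖
            ‖-((b : ℚ_[p]) * q j₀ + ∑ j, x j * q j)‖ := Padic.nonarchimedean _ _
        _ ≤ c := by rw [norm_neg]; exact max_le h1 h2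
    rw [norm_mul, hqval, hck] at hdiff
    have hpv : (0 : ℝ) < (p : ℝ) ^ v := zpow_pos hp0 v
    have hdiff2 : ‖((a : ℚ_[p]) - b)‖ ≤ (p : ℝ) ^ (-(N : ℤ)) := by
      rw [hNZ, neg_sub, zpow_sub₀ (ne_of_gt hp0)]
      exact (le_div_iff₀ hpv).2 hdiff
    have hcast : ((a : ℚ_[p]) - b) = (((a : ℤ) - b : ℤ) : ℚ_[p]) := by push_cast; ring
    rw [hcast, Padic.norm_int_le_pow_iff_dvd] at hdiff2
    have habs : |((a : ℤ) - b)| < (p : ℤ) ^ N := by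
      have hpa : (a : ℤ) < (p : ℤ) ^ N := by exact_mod_cast ha
      have hpb : (b : ℤ) < (p : ℤ) ^ N := by exact_mod_cast hb
      rw [abs_sub_lt_iff]
      omega
    have := Int.eq_zero_of_abs_lt_dvd hdiff2 habs
    omega
  -- measure of each T a equals measure of S
  have hTmeas : ∀ a, μ (T a) = μ S := fun a => measure_preimage_add μ (t a) S
  have hTms : ∀ a, MeasurableSet (T a) := fun a =>
    hSmeas.preimage (measurable_const_add (t a))
  -- sum up
  have hunion : μ (⋃ a ∈ Finset.range (p ^ N), T a) = ∑ a ∈ Finset.range (p ^ N), μ (T a) :=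
    measure_biUnion_finset hdisj fun a _ => hTms a
  have hle1 : (p ^ N : ℝ≥0∞) * μ S ≤ 1 := by
    calc (p ^ N : ℝ≥0∞) * μ S = ∑ a ∈ Finset.range (p ^ N), μ (T a) := by
          simp [hTmeas, Finset.sum_const, Finset.card_range, nsmul_eq_mul]
      _ = μ (⋃ a ∈ Finset.range (p ^ N), T a) := hunion.symm
      _ ≤ μ {y | ∀ j, ‖y j‖ ≤ 1} := measure_mono (by
          simp only [Set.iUnion_subset_iff]; exact fun a _ => hTsub a)
      _ = 1 := hμ
  have hfin : μ S ≤ ((p : ℝ≥0∞) ^ N)⁻¹ :=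
    ENNReal.le_inv_iff_mul_le.2 (by rwa [mul_comm] at hle1)
  have hcq : c / ‖q‖ = ((p : ℝ) ^ N)⁻¹ := by
    rw [hqn, hqval, hck,
      show ((p : ℝ) ^ N)⁻¹ = (p : ℝ) ^ (-(N : ℤ)) by rw [_root_.zpow_neg, zpow_natCast],
      hNZ, neg_sub, zpow_sub₀ (ne_of_gt hp0)]
  calc μ S ≤ ((p : ℝ≥0∞) ^ N)⁻¹ := hfin
    _ = ENNReal.ofReal (c / ‖q‖) := by
        rw [hcq, ENNReal.ofReal_inv_of_pos (by positivity),
          ENNReal.ofReal_pow (le_of_lt hp0), ENNReal.ofReal_natCast]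
end

section
/- (Integral invariance of the p-adic region under H_p(ℤ_p)) Let p be a prime, let ψ_p : ℝ_{>0} → ℝ_{>0} be non-increasing with ψ_p ≡ 1 on (0,1] and ψ_p taking values ≤ 1, and let T_p ∈ {p^k : k ∈ ℕ}. Define E_{ψ_p}(T_p) = {(x,y) ∈ ℚ_p^m × ℚ_p^n : ‖x‖_p^m ≤ ψ_p(‖y‖_p^n) and ‖y‖_p^n ≤ T_p}. Then for every h = [[α,0],[β,γ]] with α ∈ GL_m(ℤ_p), γ ∈ GL_n(ℤ_p), β ∈ Mat_{n,m}(ℤ_p), acting by h·(x,y) = (αx, βx + γy), one has h·E_{ψ_p}(T_p) = E_{ψ_p}(T_p). -/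
open MeasureTheory Matrix

section AuxPadic

variable {p : ℕ} [Fact p.Prime]

lemma aux_det_norm_le_one {k : ℕ} {M : Matrix (Fin k) (Fin k) ℚ_[p]}
    (h : ∀ a b, ‖M a b‖ ≤ 1) : ‖M.det‖ ≤ 1 := by
  rw [Matrix.det_apply]
  refine IsUltrametricDist.norm_sum_le_of_forall_le_of_nonneg zero_le_one ?_
  intro σ _
  have : ‖Equiv.Perm.sign σ • ∏ i, M (σ i) i‖ = ‖∏ i, M (σ i) i‖ := by
    rcases Int.units_eq_one_or (Equiv.Perm.sign σ) with hs | hs <;> simp [hs]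
  rw [this, norm_prod]
  exact Finset.prod_le_one (fun i _ => norm_nonneg _) (fun i _ => h _ _)

lemma aux_adjugate_norm_le_one {k : ℕ} {M : Matrix (Fin k) (Fin k) ℚ_[p]}
    (h : ∀ a b, ‖M a b‖ ≤ 1) : ∀ a b, ‖M.adjugate a b‖ ≤ 1 := by
  intro a b
  rw [Matrix.adjugate_apply]
  refine aux_det_norm_le_one ?_
  intro c d
  rw [Matrix.updateRow_apply]
  split
  · rcases eq_or_ne a d with rfl | hd <;> simp [Pi.single_apply, *]
  · exact h _ _

lemma aux_mulVec_norm_le {k l : ℕ} {M : Matrix (Fin k) (Fin l) ℚ_[p]}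
    (h : ∀ a b, ‖M a b‖ ≤ 1) (x : Fin l → ℚ_[p]) : ‖M.mulVec x‖ ≤ ‖x‖ := by
  rw [pi_norm_le_iff_of_nonneg (norm_nonneg x)]
  intro a
  rw [Matrix.mulVec, dotProduct]
  refine IsUltrametricDist.norm_sum_le_of_forall_le_of_nonneg (norm_nonneg x) ?_
  intro b _
  rw [norm_mul]
  calc ‖M a b‖ * ‖x b‖ ≤ 1 * ‖x‖ :=
        mul_le_mul (h a b) (norm_le_pi_norm x b) (norm_nonneg _) zero_le_one
    _ = ‖x‖ := one_mul _

lemma aux_isUnit_det {k : ℕ} {M : Matrix (Fin k) (Fin k) ℚ_[p]}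
    (hd : ‖M.det‖ = 1) : IsUnit M.det :=
  isUnit_iff_ne_zero.2 (by intro h0; rw [h0] at hd; simp at hd)

lemma aux_inv_entries_le {k : ℕ} {M : Matrix (Fin k) (Fin k) ℚ_[p]}
    (h : ∀ a b, ‖M a b‖ ≤ 1) (hd : ‖M.det‖ = 1) : ∀ a b, ‖M⁻¹ a b‖ ≤ 1 := by
  intro a b
  rw [Matrix.inv_def, Matrix.smul_apply, smul_eq_mul, norm_mul,
    Ring.inverse_eq_inv', norm_inv, hd, inv_one, one_mul]
  exact aux_adjugate_norm_le_one h a b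

lemma aux_inv_det_norm {k : ℕ} {M : Matrix (Fin k) (Fin k) ℚ_[p]}
    (hd : ‖M.det‖ = 1) : ‖M⁻¹.det‖ = 1 := by
  rw [Matrix.det_nonsing_inv, Ring.inverse_eq_inv', norm_inv, hd, inv_one]

lemma aux_mulVec_norm_eq {k : ℕ} {M : Matrix (Fin k) (Fin k) ℚ_[p]}
    (h : ∀ a b, ‖M a b‖ ≤ 1) (hd : ‖M.det‖ = 1) (x : Fin k → ℚ_[p]) :
    ‖M.mulVec x‖ = ‖x‖ := by
  refine le_antisymm (aux_mulVec_norm_le h x) ?_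
  have hx : x = M⁻¹.mulVec (M.mulVec x) := by
    rw [Matrix.mulVec_mulVec, Matrix.nonsing_inv_mul _ (aux_isUnit_det hd), Matrix.one_mulVec]
  conv_lhs => rw [hx]
  exact aux_mulVec_norm_le (aux_inv_entries_le h hd) _

lemma aux_mul_entries_le {k l r : ℕ} {A : Matrix (Fin k) (Fin l) ℚ_[p]}
    {B : Matrix (Fin l) (Fin r) ℚ_[p]} (hA : ∀ a b, ‖A a b‖ ≤ 1)
    (hB : ∀ a b, ‖B a b‖ ≤ 1) : ∀ a b, ‖(A * B) a b‖ ≤ 1 := by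
  intro a b
  rw [Matrix.mul_apply]
  refine IsUltrametricDist.norm_sum_le_of_forall_le_of_nonneg zero_le_one ?_
  intro c _
  rw [norm_mul]
  calc ‖A a c‖ * ‖B c b‖ ≤ 1 * 1 :=
        mul_le_mul (hA a c) (hB c b) (norm_nonneg _) zero_le_one
    _ = 1 := one_mul _

lemma aux_mem_key {m n : ℕ} (hm : 0 < m) (hn : 0 < n)
    {ψ : ℝ → ℝ}
    (hanti : ∀ ⦃t₁ t₂ : ℝ⦄, 0 < t₁ → t₁ ≤ t₂ → ψ t₂ ≤ ψ t₁)
    (hone : ∀ ⦃t : ℝ⦄, t ≤ 1 → ψ t = 1)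
    (hle : ∀ t, ψ t ≤ 1)
    {T : ℝ} (hT1 : 1 ≤ T)
    {α : Matrix (Fin m) (Fin m) ℚ_[p]} {β : Matrix (Fin n) (Fin m) ℚ_[p]}
    {γ : Matrix (Fin n) (Fin n) ℚ_[p]}
    (hα : ∀ a b, ‖α a b‖ ≤ 1) (hαd : ‖α.det‖ = 1)
    (hγ : ∀ a b, ‖γ a b‖ ≤ 1)
    (hβ : ∀ a b, ‖β a b‖ ≤ 1)
    {x : Fin m → ℚ_[p]} {y : Fin n → ℚ_[p]}
    (hx : ‖x‖ ^ m ≤ ψ (‖y‖ ^ n)) (hy : ‖y‖ ^ n ≤ T) :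
    ‖α.mulVec x‖ ^ m ≤ ψ (‖β.mulVec x + γ.mulVec y‖ ^ n) ∧
      ‖β.mulVec x + γ.mulVec y‖ ^ n ≤ T := by
  have hx1 : ‖x‖ ≤ 1 := by
    have : ‖x‖ ^ m ≤ 1 := hx.trans (hle _)
    exact (pow_le_one_iff_of_nonneg (norm_nonneg x) hm.ne').mp this
  set y' := β.mulVec x + γ.mulVec y with hy'def
  have hy'max : ‖y'‖ ≤ max ‖x‖ ‖y‖ := by
    have hb := aux_mulVec_norm_le hβ x
    have hg := aux_mulVec_norm_le hγ y
    rw [pi_norm_le_iff_of_nonneg (le_max_of_le_left (norm_nonneg x))]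
    intro a
    refine (IsUltrametricDist.norm_add_le_max _ _).trans ?_
    exact max_le_max ((norm_le_pi_norm _ a).trans hb) ((norm_le_pi_norm _ a).trans hg)
  have hαx : ‖α.mulVec x‖ = ‖x‖ := aux_mulVec_norm_eq hα hαd x
  constructor
  · rw [hαx]
    by_cases h1 : ‖y'‖ ^ n ≤ 1
    · rw [hone h1]
      exact hx.trans (hle _)
    · push_neg at h1
      have hy'y : ‖y'‖ ≤ ‖y‖ := by
        rcases le_total ‖x‖ ‖y‖ with hxy | hxy
        · exact hy'max.trans (max_le hxy le_rfl)
        · exfalso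
          have : ‖y'‖ ≤ 1 := hy'max.trans (max_le hx1 (hxy.trans hx1))
          exact absurd (pow_le_one₀ (norm_nonneg _) this) h1.not_ge
      refine hx.trans (hanti (lt_trans one_pos h1) ?_)
      exact pow_le_pow_left₀ (norm_nonneg _) hy'y n
  · have : ‖y'‖ ^ n ≤ (max ‖x‖ ‖y‖) ^ n := pow_le_pow_left₀ (norm_nonneg _) hy'max n
    refine this.trans ?_
    rcases max_cases ‖x‖ ‖y‖ with ⟨h, _⟩ | ⟨h, _⟩ <;> rw [h]
    · exact (pow_le_one₀ (norm_nonneg _) hx1).trans hT1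
    · exact hy

end AuxPadic

/-- **Integral invariance of the p-adic region under `H_p(ℤ_p)`.**
For a prime `p`, a non-increasing `ψ : ℝ_{>0} → ℝ_{>0}` with `ψ ≡ 1` on `(0,1]`
and values `≤ 1`, and `T = p^k` with `k ∈ ℕ`, every
`h = [[α,0],[β,γ]] ∈ H_p(ℤ_p)` satisfies `h · E_ψ(T) = E_ψ(T)`. -/
theorem padic_region_invariance
    (p : ℕ) [Fact p.Prime] (m n : ℕ) (hm : 0 < m) (hn : 0 < n)
    (ψ : ℝ → ℝ) (hpos : ∀ t, 0 < ψ t)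
    (hanti : ∀ ⦃t₁ t₂ : ℝ⦄, 0 < t₁ → t₁ ≤ t₂ → ψ t₂ ≤ ψ t₁)
    (hone : ∀ ⦃t : ℝ⦄, t ≤ 1 → ψ t = 1)
    (hle : ∀ t, ψ t ≤ 1)
    (T : ℝ) (hT : ∃ k : ℕ, T = (p : ℝ) ^ k)
    (α : Matrix (Fin m) (Fin m) ℚ_[p]) (β : Matrix (Fin n) (Fin m) ℚ_[p])
    (γ : Matrix (Fin n) (Fin n) ℚ_[p])
    (hα : (∀ a b, ‖α a b‖ ≤ 1) ∧ ‖α.det‖ = 1)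
    (hγ : (∀ a b, ‖γ a b‖ ≤ 1) ∧ ‖γ.det‖ = 1)
    (hβ : ∀ a b, ‖β a b‖ ≤ 1) :
    (fun xy : (Fin m → ℚ_[p]) × (Fin n → ℚ_[p]) =>
        (α.mulVec xy.1, β.mulVec xy.1 + γ.mulVec xy.2)) ''
      {xy : (Fin m → ℚ_[p]) × (Fin n → ℚ_[p]) | ‖xy.1‖ ^ m ≤ ψ (‖xy.2‖ ^ n) ∧ ‖xy.2‖ ^ n ≤ T}
      = {xy : (Fin m → ℚ_[p]) × (Fin n → ℚ_[p]) |
          ‖xy.1‖ ^ m ≤ ψ (‖xy.2‖ ^ n) ∧ ‖xy.2‖ ^ n ≤ T} := by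
  obtain ⟨k, rfl⟩ := hT
  have hp1 : 1 ≤ (p : ℝ) := by exact_mod_cast (Fact.out : p.Prime).one_le
  have hT1 : (1 : ℝ) ≤ (p : ℝ) ^ k := one_le_pow₀ hp1
  have hαu : IsUnit α.det := aux_isUnit_det hα.2
  have hγu : IsUnit γ.det := aux_isUnit_det hγ.2
  ext ⟨x, y⟩
  simp only [Set.mem_image, Set.mem_setOf_eq, Prod.mk.injEq, Prod.exists]
  constructor
  · rintro ⟨x0, y0, ⟨h1, h2⟩, hx, hy⟩
    rw [← hx, ← hy]
    exact aux_mem_key hm hn hanti hone hle hT1 hα.1 hα.2 hγ.1 hβ h1 h2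
  · rintro ⟨h1, h2⟩
    refine ⟨α⁻¹.mulVec x, γ⁻¹.mulVec (y - β.mulVec (α⁻¹.mulVec x)), ?_, ?_, ?_⟩
    · have heq : γ⁻¹.mulVec (y - β.mulVec (α⁻¹.mulVec x))
          = (-(γ⁻¹ * β * α⁻¹)).mulVec x + γ⁻¹.mulVec y := by
        rw [Matrix.mulVec_sub, Matrix.mulVec_mulVec, Matrix.mulVec_mulVec,
          Matrix.neg_mulVec, sub_eq_neg_add]
      rw [heq]
      refine aux_mem_key hm hn hanti hone hle hT1
        (aux_inv_entries_le hα.1 hα.2) (aux_inv_det_norm hα.2)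
        (aux_inv_entries_le hγ.1 hγ.2) ?_ h1 h2
      intro a b
      rw [Matrix.neg_apply, norm_neg]
      exact aux_mul_entries_le
        (aux_mul_entries_le (aux_inv_entries_le hγ.1 hγ.2) hβ)
        (aux_inv_entries_le hα.1 hα.2) a b
    · rw [Matrix.mulVec_mulVec, Matrix.mul_nonsing_inv _ hαu, Matrix.one_mulVec]
    · have hgg : γ *ᵥ (γ⁻¹ *ᵥ (y - β *ᵥ (α⁻¹ *ᵥ x))) = y - β *ᵥ (α⁻¹ *ᵥ x) := by
        rw [Matrix.mulVec_mulVec, Matrix.mul_nonsing_inv _ hγu, Matrix.one_mulVec]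
      rw [hgg, add_sub_cancel]
end

section
/- (Volume scaling of the perturbed regions) Let ψ = (ψ_p)_{p∈S} be a collection of approximating functions, ε ∈ (0,1), and T = (T_p) ∈ ℝ_{≥1} × ∏_{p∈S_f}{p^k : k ∈ ℕ}. Then vol(E_{ψ⁺_ε}(T⁺)) = (1+ε)^2 · vol(E_ψ(T)) and vol(E_{ψ⁻_ε}(T⁻)) = (1+ε)^{−2} · vol(E_ψ(T)). -/
open MeasureTheory Matrix

/-!
Dilating the real `x`-coordinate by `r^{1/m}` and the real `y`-coordinate by `r^{1/n}`
multiplies `‖x‖_∞^m` and `‖y‖_∞^n` by `r`, so it carries `E_ψ(T)` onto the region for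
`t ↦ r ψ_∞(t / r)` and `r T_∞`, and it multiplies Lebesgue measure on each of the two real
factors by `r`. The finite places are untouched. Take `r = (1 + ε)^{±1}`.
-/

open scoped ENNReal

namespace MeasureTheory.Measure

variable {α α' β β' : Type*} [MeasurableSpace α] [MeasurableSpace α'] [MeasurableSpace β]
  [MeasurableSpace β']

theorem map_prodMap_eq_smul_prod {μ : Measure α} {μ' : Measure α'} {ν : Measure β}
    {ν' : Measure β'} [SFinite μ] [SFinite ν] [SFinite ν'] {f : α → α'} {g : β → β'}
    (hf : Measurable f) (hg : Measurable g) {a b : ℝ≥0∞}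
    (hfμ : μ.map f = a • μ') (hgν : ν.map g = b • ν') :
    (μ.prod ν).map (Prod.map f g) = (a * b) • μ'.prod ν' := by
  rw [← map_prod_map μ ν hf hg, hfμ, hgν, prod_smul_left, prod_smul_right, smul_smul]

theorem map_prodMap_inv_smul_id_prod {E : Type*} [NormedAddCommGroup E] [NormedSpace ℝ E]
    [MeasurableSpace E] [BorelSpace E] [FiniteDimensional ℝ E] (μ : Measure E)
    [μ.IsAddHaarMeasure] (ν : Measure β) [SFinite ν] {c : ℝ} (hc : 0 < c) :
    (μ.prod ν).map (Prod.map (c⁻¹ • ·) id) =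
      ENNReal.ofReal (c ^ Module.finrank ℝ E) • μ.prod ν := by
  rw [← map_prod_map μ ν (measurable_const_smul _) measurable_id, map_id,
    map_addHaar_smul μ (inv_ne_zero hc.ne'), prod_smul_left, inv_pow,
    inv_inv, abs_of_pos (pow_pos hc _)]

end MeasureTheory.Measure

theorem norm_inv_smul_pow {E : Type*} [SeminormedAddCommGroup E] [NormedSpace ℝ E] {c : ℝ}
    (hc : 0 < c) (x : E) (k : ℕ) : ‖c⁻¹ • x‖ ^ k = (c ^ k)⁻¹ * ‖x‖ ^ k := by
  rw [norm_smul, norm_inv, Real.norm_of_nonneg hc.le, mul_pow, inv_pow]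

section Rescale

variable {m n s : ℕ} {p : Fin s → ℕ} [∀ i, Fact (p i).Prime]
  (fR : ℝ → ℝ) (fP : Fin s → ℝ → ℝ) (TR : ℝ) (TP : Fin s → ℝ)

theorem Eprod_rescale_eq_preimage {c d r : ℝ} (hc : 0 < c) (hd : 0 < d) (hcm : c ^ m = r)
    (hdn : d ^ n = r) :
    Eprod m n p (fun t => r * fR (r⁻¹ * t)) fP (r * TR) TP =
      Prod.map (Prod.map (c⁻¹ • ·) id) (Prod.map (d⁻¹ • ·) id) ⁻¹' Eprod m n p fR fP TR TP := by
  have hr : 0 < r := hcm ▸ pow_pos hc m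
  ext xy
  simp only [Eprod, Set.mem_preimage, Set.mem_ofPred_eq, Prod.map_fst, Prod.map_snd, id,
    norm_inv_smul_pow hc, norm_inv_smul_pow hd, hcm, hdn, inv_mul_le_iff₀ hr]

variable [∀ i, MeasurableSpace ℚ_[p i]]
  (ν₁ : Measure (∀ i, Fin m → ℚ_[p i])) (ν₂ : Measure (∀ i, Fin n → ℚ_[p i]))
  [SFinite ν₁] [SFinite ν₂]

theorem measure_Eprod_rescale (hm : m ≠ 0) (hn : n ≠ 0) {r : ℝ} (hr : 0 < r) :
    (((volume : Measure (Fin m → ℝ)).prod ν₁).prod ((volume : Measure (Fin n → ℝ)).prod ν₂))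
        (Eprod m n p (fun t => r * fR (r⁻¹ * t)) fP (r * TR) TP)
      = ENNReal.ofReal (r ^ 2) *
        (((volume : Measure (Fin m → ℝ)).prod ν₁).prod ((volume : Measure (Fin n → ℝ)).prod ν₂))
          (Eprod m n p fR fP TR TP) := by
  set c := r ^ (m⁻¹ : ℝ)
  set d := r ^ (n⁻¹ : ℝ)
  have hc : 0 < c := by positivity
  have hd : 0 < d := by positivity
  have hcm : c ^ m = r := Real.rpow_inv_natCast_pow hr.le hm
  have hdn : d ^ n = r := Real.rpow_inv_natCast_pow hr.le hn
  have hΦ : MeasurableEmbedding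
      (Prod.map (Prod.map (c⁻¹ • ·) id) (Prod.map (d⁻¹ • ·) id) :
        ((Fin m → ℝ) × (∀ i, Fin m → ℚ_[p i])) × ((Fin n → ℝ) × (∀ i, Fin n → ℚ_[p i])) →
          _ × _) :=
    ((MeasurableEquiv.smul₀ c⁻¹ (inv_ne_zero hc.ne')).measurableEmbedding.prodMap .id).prodMap
      ((MeasurableEquiv.smul₀ d⁻¹ (inv_ne_zero hd.ne')).measurableEmbedding.prodMap .id)
  have hx := Measure.map_prodMap_inv_smul_id_prod (volume : Measure (Fin m → ℝ)) ν₁ hc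
  have hy := Measure.map_prodMap_inv_smul_id_prod (volume : Measure (Fin n → ℝ)) ν₂ hd
  rw [Module.finrank_fin_fun, hcm] at hx
  rw [Module.finrank_fin_fun, hdn] at hy
  rw [Eprod_rescale_eq_preimage fR fP TR TP hc hd hcm hdn, ← hΦ.map_apply,
    Measure.map_prodMap_eq_smul_prod ((measurable_const_smul _).prodMap measurable_id)
      ((measurable_const_smul _).prodMap measurable_id) hx hy,
    Measure.smul_apply, smul_eq_mul, sq, ENNReal.ofReal_mul hr.le]

end Rescale

theorem volume_scaling_perturbed_regions_general
    (m n : ℕ) (hm : 0 < m) (hn : 0 < n)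
    (s : ℕ) (p : Fin s → ℕ) [∀ i, Fact (p i).Prime]
    [∀ i, MeasurableSpace ℚ_[p i]]
    (ψ : ApproxFamily m n s p)
    (ε : ℝ) (hε₀ : 0 < ε)
    -- Haar measures on `ℚ_S^m` and `ℚ_S^n`, normalized so that the integer points
    -- have measure one at each finite place:
    (μm : ∀ i, Measure (Fin m → ℚ_[p i])) [∀ i, (μm i).IsAddHaarMeasure]
    (μn : ∀ i, Measure (Fin n → ℚ_[p i])) [∀ i, (μn i).IsAddHaarMeasure]
    (TR : ℝ) (TP : Fin s → ℝ) :
    (((volume : Measure (Fin m → ℝ)).prod (Measure.pi μm)).prod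
        ((volume : Measure (Fin n → ℝ)).prod (Measure.pi μn)))
        (Eprod m n p (fun t => (1 + ε) * ψ.psiR ((1 + ε)⁻¹ * t)) ψ.psiP ((1 + ε) * TR) TP)
      = ENNReal.ofReal ((1 + ε) ^ 2)
        * (((volume : Measure (Fin m → ℝ)).prod (Measure.pi μm)).prod
            ((volume : Measure (Fin n → ℝ)).prod (Measure.pi μn)))
            (Eprod m n p ψ.psiR ψ.psiP TR TP) ∧
    (((volume : Measure (Fin m → ℝ)).prod (Measure.pi μm)).prod
        ((volume : Measure (Fin n → ℝ)).prod (Measure.pi μn)))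
        (Eprod m n p (fun t => (1 + ε)⁻¹ * ψ.psiR ((1 + ε) * t)) ψ.psiP ((1 + ε)⁻¹ * TR) TP)
      = ENNReal.ofReal (((1 + ε) ^ 2)⁻¹)
        * (((volume : Measure (Fin m → ℝ)).prod (Measure.pi μm)).prod
            ((volume : Measure (Fin n → ℝ)).prod (Measure.pi μn)))
            (Eprod m n p ψ.psiR ψ.psiP TR TP) := by
  have hr : 0 < 1 + ε := by linarith
  have hdilate {r : ℝ} (hr : 0 < r) :=
    measure_Eprod_rescale ψ.psiR ψ.psiP TR TP (Measure.pi μm) (Measure.pi μn) hm.ne' hn.ne' hr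
  refine ⟨hdilate hr, ?_⟩
  rw [← inv_pow]
  simpa only [inv_inv] using hdilate (inv_pos.2 hr)

/-- **Volume scaling of the perturbed regions.**  For `ε ∈ (0,1)` and an admissible
tuple `T`, `vol(E_{ψ⁺_ε}(T⁺)) = (1+ε)² vol(E_ψ(T))` and
`vol(E_{ψ⁻_ε}(T⁻)) = (1+ε)^{−2} vol(E_ψ(T))`. -/
theorem volume_scaling_perturbed_regions
    (m n : ℕ) (hm : 0 < m) (hn : 0 < n)
    (s : ℕ) (p : Fin s → ℕ) [∀ i, Fact (p i).Prime] (hpinj : Function.Injective p)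
    [∀ i, MeasurableSpace ℚ_[p i]] [∀ i, BorelSpace ℚ_[p i]]
    (ψ : ApproxFamily m n s p)
    (ε : ℝ) (hε₀ : 0 < ε) (hε₁ : ε < 1)
    -- Haar measures on `ℚ_S^m` and `ℚ_S^n`, normalized so that the integer points
    -- have measure one at each finite place:
    (μm : ∀ i, Measure (Fin m → ℚ_[p i])) [∀ i, (μm i).IsAddHaarMeasure]
    (hμm : ∀ i, μm i {y | ∀ j, ‖y j‖ ≤ 1} = 1)
    (μn : ∀ i, Measure (Fin n → ℚ_[p i])) [∀ i, (μn i).IsAddHaarMeasure]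
    (hμn : ∀ i, μn i {y | ∀ j, ‖y j‖ ≤ 1} = 1)
    (TR : ℝ) (hTR : 1 ≤ TR) (TP : Fin s → ℝ) (hTP : ∀ i, ∃ k : ℕ, TP i = (p i : ℝ) ^ k) :
    (((volume : Measure (Fin m → ℝ)).prod (Measure.pi μm)).prod
        ((volume : Measure (Fin n → ℝ)).prod (Measure.pi μn)))
        (Eprod m n p (fun t => (1 + ε) * ψ.psiR ((1 + ε)⁻¹ * t)) ψ.psiP ((1 + ε) * TR) TP)
      = ENNReal.ofReal ((1 + ε) ^ 2)
        * (((volume : Measure (Fin m → ℝ)).prod (Measure.pi μm)).prod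
            ((volume : Measure (Fin n → ℝ)).prod (Measure.pi μn)))
            (Eprod m n p ψ.psiR ψ.psiP TR TP) ∧
    (((volume : Measure (Fin m → ℝ)).prod (Measure.pi μm)).prod
        ((volume : Measure (Fin n → ℝ)).prod (Measure.pi μn)))
        (Eprod m n p (fun t => (1 + ε)⁻¹ * ψ.psiR ((1 + ε) * t)) ψ.psiP ((1 + ε)⁻¹ * TR) TP)
      = ENNReal.ofReal (((1 + ε) ^ 2)⁻¹)
        * (((volume : Measure (Fin m → ℝ)).prod (Measure.pi μm)).prod
            ((volume : Measure (Fin n → ℝ)).prod (Measure.pi μn)))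
            (Eprod m n p ψ.psiR ψ.psiP TR TP) :=
  volume_scaling_perturbed_regions_general m n hm hn s p ψ ε hε₀ μm μn TR TP
end
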